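/- arXiv:2501.09471 — 7 statements merged into one kernel-verified Lean document; each statement's English description precedes it below -/
import Mathlib

section
/- For every constant specification CS for LPC⁺ and every formula φ, both counterpossible schemes are LPC⁺_CS-valid: ⊨_{LPC⁺_CS} ⊥ > φ and ⊨_{LPC⁺_CS} φ > ⊤ (where ⊥ := φ∧¬φ and ⊤ := ¬⊥). -/
namespace LPCplus

/-- Justification terms: constants, variables, application, sum, proof checker. -/
inductive Tm : Type
  | const : ℕ → Tm
  | var   : ℕ → Tm
  | app   : Tm → Tm → Tm
  | sum   : Tm → Tm → Tm
  | bang  : Tm → Tm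
  deriving DecidableEq

/-- Formulas of LPC⁺. -/
inductive Fm : Type
  | atom : ℕ → Fm
  | neg  : Fm → Fm
  | and  : Fm → Fm → Fm
  | imp  : Fm → Fm → Fm
  | cond : Fm → Fm → Fm   -- the counterfactual conditional `>`
  | box  : Tm → Fm → Fm   -- justification assertion `[t]φ`
  deriving DecidableEq

/-- A classical propositional tautology in the language of LPC⁺: true under every
boolean valuation of formulas that respects the classical connectives ¬, ∧, ⊃. -/
def IsTaut (φ : Fm) : Prop :=
  ∀ v : Fm → Bool,
    (∀ ψ, v (Fm.neg ψ) = !(v ψ)) →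
    (∀ ψ χ, v (Fm.and ψ χ) = (v ψ && v χ)) →
    (∀ ψ χ, v (Fm.imp ψ χ) = (!(v ψ) || v χ)) →
    v φ = true

/-- Axioms of LPC⁺. -/
inductive Ax : Fm → Prop
  | taut (φ : Fm) : IsTaut φ → Ax φ
  | a2 (φ ψ χ : Fm) : Ax ((φ.cond (ψ.imp χ)).imp ((φ.cond ψ).imp (φ.cond χ)))
  | a3 (φ : Fm) : Ax (φ.cond φ)
  | a4 (φ ψ : Fm) : Ax ((φ.cond ψ).imp (φ.imp ψ))
  | a5 (s t : Tm) (φ ψ : Fm) :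
      Ax (((Fm.box s (φ.cond ψ)).and (Fm.box t φ)).cond (Fm.box (s.app t) ψ))
  | a6 (s t : Tm) (φ : Fm) : Ax ((Fm.box s φ).cond (Fm.box (s.sum t) φ))
  | a7 (s t : Tm) (φ : Fm) : Ax ((Fm.box t φ).cond (Fm.box (s.sum t) φ))
  | a8 (t : Tm) (φ : Fm) : Ax ((Fm.box t φ).cond φ)
  | a9 (t : Tm) (φ : Fm) : Ax ((Fm.box t φ).cond (Fm.box t.bang (Fm.box t φ)))

/-- A constant specification: a set of formulas `[c]φ` with `φ` an axiom instance. -/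
def IsCS (CS : Set Fm) : Prop :=
  ∀ χ ∈ CS, ∃ (c : ℕ) (φ : Fm), χ = Fm.box (Tm.const c) φ ∧ Ax φ

/-- Derivability in LPC⁺_CS. -/
inductive Prv (CS : Set Fm) : Fm → Prop
  | ax  {φ} : Ax φ → Prv CS φ
  | cs  {φ} : φ ∈ CS → Prv CS φ
  | mp  {φ ψ} : Prv CS (φ.imp ψ) → Prv CS φ → Prv CS ψ
  | rcn (φ : Fm) {ψ} : Prv CS ψ → Prv CS (φ.cond ψ)

/-- ⊥ := φ ∧ ¬φ (a fixed instance). -/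
def botF : Fm := (Fm.atom 0).and (Fm.neg (Fm.atom 0))

/-- ⊤ := ¬⊥. -/
def topF : Fm := Fm.neg botF

/-- Conjunction ψ₁ ∧ ⋯ ∧ ψₙ of a list (⊤ for the empty list). -/
def listConj : List Fm → Fm
  | [] => topF
  | ψ :: l => l.foldl Fm.and ψ

/-- T ⊢_{LPC⁺_CS} φ iff ⊢_{LPC⁺_CS} (ψ₁ ∧ ⋯ ∧ ψₙ) ⊃ φ for some ψ₁,…,ψₙ ∈ T. -/
def Deriv (CS : Set Fm) (T : Set Fm) (φ : Fm) : Prop :=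
  ∃ l : List Fm, (∀ ψ ∈ l, ψ ∈ T) ∧ Prv CS ((listConj l).imp φ)

def Consis (CS : Set Fm) (T : Set Fm) : Prop := ¬ Deriv CS T botF

/-- Maximal LPC⁺_CS-consistent sets. -/
def MCS (CS : Set Fm) (Γ : Set Fm) : Prop :=
  Consis CS Γ ∧ ∀ Δ, Consis CS Δ → Γ ⊆ Δ → Δ = Γ

/-- A relational model. -/
structure Model where
  W : Type
  N : Set W
  Rf : Fm → W → W → Prop
  Rf_norm : ∀ φ w v, Rf φ w v → w ∈ N ∧ v ∈ N   -- R_φ is a relation on W_N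
  Rt : Tm → W → W → Prop
  Vn : W → Set ℕ     -- valuation at normal states (sets of atoms)
  Vf : W → Set Fm    -- valuation at non-normal states (sets of formulas)

/-- Truth at a state. -/
def Sat (M : Model) : Fm → M.W → Prop
  | .atom p, w => (w ∈ M.N ∧ p ∈ M.Vn w) ∨ (w ∉ M.N ∧ Fm.atom p ∈ M.Vf w)
  | .neg φ, w => (w ∈ M.N ∧ ¬ Sat M φ w) ∨ (w ∉ M.N ∧ Fm.neg φ ∈ M.Vf w)
  | .and φ ψ, w => (w ∈ M.N ∧ Sat M φ w ∧ Sat M ψ w) ∨ (w ∉ M.N ∧ Fm.and φ ψ ∈ M.Vf w)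
  | .imp φ ψ, w => (w ∈ M.N ∧ (Sat M φ w → Sat M ψ w)) ∨ (w ∉ M.N ∧ Fm.imp φ ψ ∈ M.Vf w)
  | .cond φ ψ, w =>
      (w ∈ M.N ∧ ∀ v, M.Rf φ w v → Sat M ψ v) ∨ (w ∉ M.N ∧ Fm.cond φ ψ ∈ M.Vf w)
  | .box t φ, w =>
      (w ∈ M.N ∧ ∀ v, M.Rt t w v → Sat M φ v) ∨ (w ∉ M.N ∧ Fm.box t φ ∈ M.Vf w)

/-- Conditions (C1)–(C7) making a relational model an LPC⁺_CS-model. -/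
def IsModel (CS : Set Fm) (M : Model) : Prop :=
  (∀ φ (w v : M.W), w ∈ M.N → M.Rf φ w v → Sat M φ v) ∧
  (∀ φ (w : M.W), w ∈ M.N → Sat M φ w → M.Rf φ w w) ∧
  (∀ (c : ℕ) φ, Fm.box (Tm.const c) φ ∈ CS →
      ∀ (w v : M.W), w ∈ M.N → M.Rt (Tm.const c) w v → Sat M φ v) ∧
  (∀ (s t : Tm) (w v : M.W), w ∈ M.N → M.Rt (s.sum t) w v → M.Rt s w v ∧ M.Rt t w v) ∧
  (∀ (s t : Tm) (w v : M.W), w ∈ M.N → M.Rt (s.app t) w v →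
      ∀ φ ψ, Sat M ((Fm.box s (φ.cond ψ)).and (Fm.box t φ)) w → Sat M ψ v) ∧
  (∀ (t : Tm) (w : M.W), w ∈ M.N → M.Rt t w w) ∧
  (∀ (t : Tm) (w v u : M.W), w ∈ M.N → M.Rt t.bang w v → M.Rt t v u → M.Rt t w u)

/-- LPC⁺_CS-validity. -/
def Valid (CS : Set Fm) (φ : Fm) : Prop :=
  ∀ M : Model, IsModel CS M → ∀ w ∈ M.N, Sat M φ w

/-- Local semantic consequence. -/
def Conseq (CS : Set Fm) (T : Set Fm) (φ : Fm) : Prop :=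
  ∀ M : Model, IsModel CS M → ∀ w ∈ M.N, (∀ ψ ∈ T, Sat M ψ w) → Sat M φ w

/-- Material equivalence φ ≡ ψ. -/
def eqv (φ ψ : Fm) : Fm := (φ.imp ψ).and (ψ.imp φ)

/-- Counterfactual biconditional φ ⇔ ψ. -/
def condEqv (φ ψ : Fm) : Fm := (φ.cond ψ).and (ψ.cond φ)

/-- Disjunction φ ∨ ψ := ¬(¬φ ∧ ¬ψ). -/
def orF (φ ψ : Fm) : Fm := Fm.neg ((Fm.neg φ).and (Fm.neg ψ))

/-- The canonical relational model for LPC⁺_CS. -/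
def canonical (CS : Set Fm) : Model where
  W := Set Fm
  N := {Γ | MCS CS Γ}
  Rf φ Γ Δ := MCS CS Γ ∧ MCS CS Δ ∧ {ψ | Fm.cond φ ψ ∈ Γ} ⊆ Δ
  Rf_norm := fun _ _ _ h => ⟨h.1, h.2.1⟩
  Rt t Γ Δ := {ψ | Fm.box t ψ ∈ Γ} ⊆ Δ
  Vn Γ := {p | Fm.atom p ∈ Γ}
  Vf Γ := Γ

end LPCplus

/-! Counterfactual accessibility only reaches normal states, where a contradiction `χ ∧ ¬χ` is
false and its negation true. Hence `φ > ⊤` holds trivially, and by (C1) `R_⊥(w)` is empty, so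
`⊥ > φ` holds vacuously. -/

namespace LPCplus

variable {M : Model} {w : M.W}

theorem sat_neg_iff (hw : w ∈ M.N) (φ : Fm) : Sat M φ.neg w ↔ ¬ Sat M φ w := by
  simp [Sat, hw]

theorem sat_and_iff (hw : w ∈ M.N) (φ ψ : Fm) :
    Sat M (φ.and ψ) w ↔ Sat M φ w ∧ Sat M ψ w := by
  simp [Sat, hw]

theorem sat_cond_iff (hw : w ∈ M.N) (φ ψ : Fm) :
    Sat M (φ.cond ψ) w ↔ ∀ v, M.Rf φ w v → Sat M ψ v := by
  simp [Sat, hw]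

theorem not_sat_and_neg (hw : w ∈ M.N) (χ : Fm) : ¬ Sat M (χ.and χ.neg) w := by
  rw [sat_and_iff hw, sat_neg_iff hw]
  exact fun ⟨h, hn⟩ => hn h

theorem sat_cond_of_forall_not_sat {CS : Set Fm} (hM : IsModel CS M) (hw : w ∈ M.N)
    {ψ : Fm} (hψ : ∀ v ∈ M.N, ¬ Sat M ψ v) (φ : Fm) : Sat M (ψ.cond φ) w :=
  (sat_cond_iff hw ψ φ).2 fun v hv =>
    absurd (hM.1 ψ w v hw hv) (hψ v (M.Rf_norm ψ w v hv).2)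

theorem sat_cond_of_forall_sat (hw : w ∈ M.N) {ψ : Fm} (hψ : ∀ v ∈ M.N, Sat M ψ v)
    (φ : Fm) : Sat M (φ.cond ψ) w :=
  (sat_cond_iff hw φ ψ).2 fun v hv => hψ v (M.Rf_norm φ w v hv).2

end LPCplus

open LPCplus in
theorem stmt_2_general (CS : Set Fm) (φ χ : Fm) :
    Valid CS ((χ.and χ.neg).cond φ) ∧ Valid CS (φ.cond (Fm.neg (χ.and χ.neg))) :=
  ⟨fun _ hM _ hw => sat_cond_of_forall_not_sat hM hw (fun _ hv => not_sat_and_neg hv χ) φ,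
   fun _ _ _ hw => sat_cond_of_forall_sat hw
     (fun _ hv => (sat_neg_iff hv _).2 (not_sat_and_neg hv χ)) φ⟩

open LPCplus in
/-- Counterpossibles are valid: ⊨_{LPC⁺_CS} ⊥ > φ and ⊨_{LPC⁺_CS} φ > ⊤,
where ⊥ := χ ∧ ¬χ and ⊤ := ¬⊥. -/
theorem stmt_2 (CS : Set Fm) (hCS : IsCS CS) (φ χ : Fm) :
    Valid CS ((χ.and χ.neg).cond φ) ∧ Valid CS (φ.cond (Fm.neg (χ.and χ.neg))) :=
  stmt_2_general CS φ χ
end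

section
/- Truth Lemma: in the canonical relational model M for LPC⁺_CS, for every formula φ and every state Γ of M (normal or not), M,Γ ⊨ φ if and only if φ ∈ Γ. -/
/-!
At a non-normal state truth is membership by definition of the valuation. At a maximal consistent
set the boolean cases follow from its closure under tautological consequence. For `φ > ψ ∉ Γ`,
the set `{χ | φ > χ ∈ Γ} ∪ {¬ψ}` is consistent, since a derivation of `ψ` from finitely many `χ`
lifts under `φ >` by RCN and the K-axiom for `>`; Lindenbaum's lemma (Teichmüller–Tukey, as
consistency has finite character) extends it to a normal state refuting `ψ`. For `[t]φ` no
existence lemma is needed: the set `{χ | [t]χ ∈ Γ}` is itself an `R_t`-successor of `Γ`, and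
by induction truth there is membership.
-/

namespace LPCplus

structure IsBoolVal (v : Fm → Bool) : Prop where
  neg : ∀ ψ, v (Fm.neg ψ) = !(v ψ)
  and : ∀ ψ χ, v (Fm.and ψ χ) = (v ψ && v χ)
  imp : ∀ ψ χ, v (Fm.imp ψ χ) = (!(v ψ) || v χ)

def TautEntails (l : List Fm) (φ : Fm) : Prop :=
  ∀ v, IsBoolVal v → (∀ ψ ∈ l, v ψ = true) → v φ = true

-- Unlike `listConj`, this lets `φ > ·` be pushed through one premise at a time by the K-axiom.
def impChain : List Fm → Fm → Fm
  | [], φ => φ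
  | ψ :: l, φ => ψ.imp (impChain l φ)

namespace IsBoolVal

variable {v : Fm → Bool} (hv : IsBoolVal v)
include hv

theorem neg_eq_true (ψ : Fm) : v ψ.neg = true ↔ ¬v ψ = true := by
  simp [hv.neg]

theorem and_eq_true (ψ χ : Fm) : v (ψ.and χ) = true ↔ v ψ = true ∧ v χ = true := by
  simp [hv.and]

theorem imp_eq_true (ψ χ : Fm) : v (ψ.imp χ) = true ↔ (v ψ = true → v χ = true) := by
  rw [hv.imp]; cases v ψ <;> simp

theorem botF_ne_true : ¬v botF = true := by
  simp [botF, hv.and_eq_true, hv.neg_eq_true]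

theorem foldl_and_eq_true (l : List Fm) (a : Fm) :
    v (l.foldl Fm.and a) = true ↔ v a = true ∧ ∀ ψ ∈ l, v ψ = true := by
  induction l generalizing a with
  | nil => simp
  | cons ψ l ih => simp [ih, hv.and_eq_true, and_assoc]

theorem listConj_eq_true (l : List Fm) : v (listConj l) = true ↔ ∀ ψ ∈ l, v ψ = true := by
  cases l with
  | nil => simp [listConj, topF, hv.neg_eq_true, hv.botF_ne_true]
  | cons ψ l => simp [listConj, hv.foldl_and_eq_true]

theorem impChain_eq_true (l : List Fm) (φ : Fm) :
    v (impChain l φ) = true ↔ ((∀ ψ ∈ l, v ψ = true) → v φ = true) := by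
  induction l with
  | nil => simp [impChain]
  | cons ψ l ih => simp [impChain, hv.imp_eq_true, ih]

end IsBoolVal

section Prv

variable {CS : Set Fm}

theorem Prv.of_impChain {l : List Fm} {φ : Fm} (h : Prv CS (impChain l φ))
    (hl : ∀ ψ ∈ l, Prv CS ψ) : Prv CS φ := by
  induction l with
  | nil => exact h
  | cons ψ l ih => exact ih (h.mp (hl ψ (by simp))) (fun χ hχ => hl χ (by simp [hχ]))

theorem Prv.of_tautEntails {l : List Fm} {φ : Fm} (h : TautEntails l φ)
    (hl : ∀ ψ ∈ l, Prv CS ψ) : Prv CS φ :=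
  (Prv.ax (Ax.taut _ fun v hn ha hi =>
    (IsBoolVal.impChain_eq_true ⟨hn, ha, hi⟩ l φ).2 (h v ⟨hn, ha, hi⟩))).of_impChain hl

theorem Prv.listConj_imp_of_subset {l₁ l₂ : List Fm} {φ : Fm} (hsub : l₁ ⊆ l₂)
    (h : Prv CS ((listConj l₁).imp φ)) : Prv CS ((listConj l₂).imp φ) := by
  refine Prv.of_tautEntails (l := [(listConj l₁).imp φ]) (fun v hv hl => ?_) (by simpa using h)
  simp only [List.mem_singleton, forall_eq, hv.imp_eq_true, hv.listConj_eq_true] at hl ⊢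
  grind

end Prv

namespace Deriv

variable {CS T : Set Fm}

theorem mono {T' : Set Fm} {φ : Fm} (hsub : T ⊆ T') (h : Deriv CS T φ) : Deriv CS T' φ :=
  let ⟨l, hl, hp⟩ := h
  ⟨l, fun ψ hψ => hsub (hl ψ hψ), hp⟩

theorem of_prv {φ : Fm} (h : Prv CS φ) : Deriv CS T φ :=
  ⟨[], by simp, Prv.of_tautEntails (l := [φ])
    (fun v hv hl => by simp_all [hv.imp_eq_true]) (by simpa using h)⟩

theorem of_mem {φ : Fm} (h : φ ∈ T) : Deriv CS T φ :=
  ⟨[φ], by simpa using h, Prv.of_tautEntails (l := []) (fun v hv _ => by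
    simp [listConj, hv.imp_eq_true]) (by simp)⟩

theorem exists_common_premises {l : List Fm} (hl : ∀ ψ ∈ l, Deriv CS T ψ) :
    ∃ L : List Fm, (∀ χ ∈ L, χ ∈ T) ∧ ∀ ψ ∈ l, Prv CS ((listConj L).imp ψ) := by
  induction l with
  | nil => exact ⟨[], by simp, by simp⟩
  | cons ψ l ih =>
    obtain ⟨L, hLT, hL⟩ := ih (fun χ hχ => hl χ (by simp [hχ]))
    obtain ⟨L', hL'T, hL'⟩ := hl ψ (by simp)
    refine ⟨L' ++ L, by simp only [List.mem_append]; grind, ?_⟩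
    simp only [List.mem_cons, forall_eq_or_imp]
    exact ⟨hL'.listConj_imp_of_subset (by simp),
      fun χ hχ => (hL χ hχ).listConj_imp_of_subset (by simp)⟩

theorem of_tautEntails {l : List Fm} {φ : Fm} (hl : ∀ ψ ∈ l, Deriv CS T ψ)
    (h : TautEntails l φ) : Deriv CS T φ := by
  obtain ⟨L, hLT, hL⟩ := exists_common_premises hl
  refine ⟨L, hLT, Prv.of_tautEntails (l := l.map ((listConj L).imp ·)) (fun v hv hl => ?_)
    (by simpa using hL)⟩
  simp only [List.mem_map, forall_exists_index, and_imp, forall_apply_eq_imp_iff₂,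
    hv.imp_eq_true] at hl ⊢
  exact fun hL => h v hv fun ψ hψ => hl ψ hψ hL

theorem imp_of_insert {φ ψ : Fm} (h : Deriv CS (insert φ T) ψ) : Deriv CS T (φ.imp ψ) := by
  obtain ⟨l, hl, hp⟩ := h
  refine ⟨l.filter (· ≠ φ), fun χ hχ => ?_, Prv.of_tautEntails (l := [(listConj l).imp ψ])
    (fun v hv hl => ?_) (by simpa using hp)⟩
  · simp only [List.mem_filter, decide_eq_true_eq] at hχ
    exact (hl χ hχ.1).resolve_left hχ.2
  · simp only [List.mem_singleton, forall_eq, hv.imp_eq_true, hv.listConj_eq_true, List.mem_filter,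
      decide_eq_true_eq] at hl ⊢
    grind

end Deriv

theorem Consis.mono {CS T T' : Set Fm} (hsub : T ⊆ T') (h : Consis CS T') : Consis CS T :=
  fun hd => h (hd.mono hsub)

theorem isOfFiniteCharacter_consis (CS : Set Fm) :
    Order.IsOfFiniteCharacter {T | Consis CS T} := by
  refine fun T => ⟨fun h S hS _ => Consis.mono hS h, fun h ⟨l, hl, hp⟩ => ?_⟩
  exact h {ψ | ψ ∈ l} hl l.finite_toSet ⟨l, fun _ => id, hp⟩

theorem exists_mcs_superset {CS T : Set Fm} (h : Consis CS T) :
    ∃ Γ, T ⊆ Γ ∧ MCS CS Γ := by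
  obtain ⟨Γ, hTΓ, hmax⟩ := (isOfFiniteCharacter_consis CS).exists_maximal h
  exact ⟨Γ, hTΓ, hmax.prop, fun Δ hΔ hΓΔ => (hmax.eq_of_subset hΔ hΓΔ).symm⟩

namespace MCS

variable {CS Γ : Set Fm} (hΓ : MCS CS Γ)
include hΓ

theorem deriv_imp_botF_of_not_mem {φ : Fm} (hφ : φ ∉ Γ) : Deriv CS Γ (φ.imp botF) := by
  refine Deriv.imp_of_insert (not_not.1 fun hc => hφ ?_)
  exact hΓ.2 _ hc (Set.subset_insert φ Γ) ▸ Set.mem_insert φ Γ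

theorem mem_of_deriv {φ : Fm} (h : Deriv CS Γ φ) : φ ∈ Γ := by
  by_contra hφ
  refine hΓ.1 (Deriv.of_tautEntails (l := [φ, φ.imp botF]) ?_ fun v hv hl => ?_)
  · simpa [h] using hΓ.deriv_imp_botF_of_not_mem hφ
  · simp_all [hv.imp_eq_true]

theorem mem_of_prv {φ : Fm} (h : Prv CS φ) : φ ∈ Γ :=
  hΓ.mem_of_deriv (Deriv.of_prv h)

theorem mem_of_tautEntails {l : List Fm} {φ : Fm} (hl : ∀ ψ ∈ l, ψ ∈ Γ)
    (h : TautEntails l φ) : φ ∈ Γ :=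
  hΓ.mem_of_deriv (Deriv.of_tautEntails (fun ψ hψ => Deriv.of_mem (hl ψ hψ)) h)

theorem botF_not_mem : botF ∉ Γ :=
  fun h => hΓ.1 (Deriv.of_mem h)

theorem neg_mem_iff {φ : Fm} : φ.neg ∈ Γ ↔ φ ∉ Γ := by
  refine ⟨fun hn hφ => hΓ.botF_not_mem (hΓ.mem_of_tautEntails (l := [φ, φ.neg]) ?_ ?_),
    fun hφ => hΓ.mem_of_deriv (Deriv.of_tautEntails (l := [φ.imp botF]) ?_ ?_)⟩
  · simp [hφ, hn]
  · intro v hv hl; simp_all [hv.neg_eq_true]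
  · simpa using hΓ.deriv_imp_botF_of_not_mem hφ
  · intro v hv hl; simp_all [hv.neg_eq_true, hv.imp_eq_true, hv.botF_ne_true]

theorem and_mem_iff {φ ψ : Fm} : φ.and ψ ∈ Γ ↔ φ ∈ Γ ∧ ψ ∈ Γ := by
  refine ⟨fun h => ⟨?_, ?_⟩, fun h => ?_⟩
  · refine hΓ.mem_of_tautEntails (l := [φ.and ψ]) (by simp [h]) fun v hv hl => ?_
    simp_all [hv.and_eq_true]
  · refine hΓ.mem_of_tautEntails (l := [φ.and ψ]) (by simp [h]) fun v hv hl => ?_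
    simp_all [hv.and_eq_true]
  · refine hΓ.mem_of_tautEntails (l := [φ, ψ]) (by simp [h]) fun v hv hl => ?_
    simp_all [hv.and_eq_true]

theorem imp_mem_iff {φ ψ : Fm} : φ.imp ψ ∈ Γ ↔ (φ ∈ Γ → ψ ∈ Γ) := by
  refine ⟨fun h hφ => hΓ.mem_of_tautEntails (l := [φ.imp ψ, φ]) ?_ ?_, fun h => ?_⟩
  · simp [h, hφ]
  · intro v hv hl; simp_all [hv.imp_eq_true]
  by_cases hφ : φ ∈ Γ
  · refine hΓ.mem_of_tautEntails (l := [ψ]) (by simp [h hφ]) ?_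
    intro v hv hl; simp_all [hv.imp_eq_true]
  · refine hΓ.mem_of_tautEntails (l := [φ.neg]) (by simp [hΓ.neg_mem_iff, hφ]) ?_
    intro v hv hl; simp_all [hv.imp_eq_true, hv.neg_eq_true]

theorem cond_mem_of_impChain {φ ψ : Fm} {l : List Fm} (h : φ.cond (impChain l ψ) ∈ Γ)
    (hl : ∀ χ ∈ l, φ.cond χ ∈ Γ) : φ.cond ψ ∈ Γ := by
  induction l with
  | nil => exact h
  | cons χ l ih =>
    have hA2 := hΓ.mem_of_prv (Prv.ax (CS := CS) (Ax.a2 φ χ (impChain l ψ)))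
    rw [hΓ.imp_mem_iff, hΓ.imp_mem_iff] at hA2
    exact ih (hA2 h (hl χ (by simp))) (fun χ' hχ' => hl χ' (by simp [hχ']))

theorem cond_mem_of_deriv {φ ψ : Fm} (h : Deriv CS {χ | φ.cond χ ∈ Γ} ψ) :
    φ.cond ψ ∈ Γ := by
  obtain ⟨l, hl, hp⟩ := h
  refine hΓ.cond_mem_of_impChain (hΓ.mem_of_prv (Prv.rcn φ ?_)) hl
  refine Prv.of_tautEntails (l := [(listConj l).imp ψ]) (fun v hv h => ?_) (by simpa using hp)
  simp_all [hv.imp_eq_true, hv.impChain_eq_true, hv.listConj_eq_true]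

theorem exists_mcs_of_cond_not_mem {φ ψ : Fm} (h : φ.cond ψ ∉ Γ) :
    ∃ Δ, MCS CS Δ ∧ {χ | φ.cond χ ∈ Γ} ⊆ Δ ∧ ψ ∉ Δ := by
  have hcons : Consis CS (insert ψ.neg {χ | φ.cond χ ∈ Γ}) := fun hd =>
    h (hΓ.cond_mem_of_deriv (Deriv.of_tautEntails (l := [ψ.neg.imp botF])
      (by simpa using hd.imp_of_insert)
      (fun v hv hl => by simp_all [hv.imp_eq_true, hv.neg_eq_true, hv.botF_ne_true])))
  obtain ⟨Δ, hsub, hΔ⟩ := exists_mcs_superset hcons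
  exact ⟨Δ, hΔ, (Set.subset_insert _ _).trans hsub, hΔ.neg_mem_iff.1 (hsub (Set.mem_insert _ _))⟩

theorem cond_mem_iff {φ ψ : Fm} :
    φ.cond ψ ∈ Γ ↔ ∀ Δ, MCS CS Δ → {χ | φ.cond χ ∈ Γ} ⊆ Δ → ψ ∈ Δ := by
  refine ⟨fun h Δ _ hsub => hsub h, fun h => not_not.1 fun hn => ?_⟩
  obtain ⟨Δ, hΔ, hsub, hψ⟩ := hΓ.exists_mcs_of_cond_not_mem hn
  exact hψ (h Δ hΔ hsub)

end MCS

namespace Model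

variable (M : Model) {w : M.W}

theorem sat_iff_mem_Vf_of_not_mem_N (hw : w ∉ M.N) (φ : Fm) : Sat M φ w ↔ φ ∈ M.Vf w := by
  cases φ <;> simp [Sat, hw]

variable (hw : w ∈ M.N)
include hw

theorem sat_atom_iff (p : ℕ) : Sat M (.atom p) w ↔ p ∈ M.Vn w := by
  simp [Sat, hw]

theorem sat_neg_iff (φ : Fm) : Sat M φ.neg w ↔ ¬Sat M φ w := by
  simp [Sat, hw]

theorem sat_and_iff (φ ψ : Fm) : Sat M (φ.and ψ) w ↔ Sat M φ w ∧ Sat M ψ w := by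
  simp [Sat, hw]

theorem sat_imp_iff (φ ψ : Fm) : Sat M (φ.imp ψ) w ↔ (Sat M φ w → Sat M ψ w) := by
  simp [Sat, hw]

theorem sat_cond_iff (φ ψ : Fm) : Sat M (φ.cond ψ) w ↔ ∀ v, M.Rf φ w v → Sat M ψ v := by
  simp [Sat, hw]

theorem sat_box_iff (t : Tm) (φ : Fm) : Sat M (.box t φ) w ↔ ∀ v, M.Rt t w v → Sat M φ v := by
  simp [Sat, hw]

end Model

theorem sat_canonical_iff_of_mcs {CS : Set Fm} {φ : Fm}
    (h : ∀ Γ, MCS CS Γ → (Sat (canonical CS) φ Γ ↔ φ ∈ Γ)) (Γ : Set Fm) :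
    Sat (canonical CS) φ Γ ↔ φ ∈ Γ := by
  by_cases hΓ : MCS CS Γ
  · exact h Γ hΓ
  · exact (canonical CS).sat_iff_mem_Vf_of_not_mem_N hΓ φ

end LPCplus

open LPCplus in
theorem stmt_6_general (CS : Set Fm) (φ : Fm) (Γ : Set Fm) :
    Sat (canonical CS) φ Γ ↔ φ ∈ Γ := by
  induction φ generalizing Γ <;> refine sat_canonical_iff_of_mcs (fun Δ hΔ => ?_) Γ
  case atom p => exact (canonical CS).sat_atom_iff hΔ p
  case neg φ ih =>
    exact ((canonical CS).sat_neg_iff hΔ φ).trans ((not_congr (ih Δ)).trans hΔ.neg_mem_iff.symm)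
  case and φ ψ ihφ ihψ =>
    exact ((canonical CS).sat_and_iff hΔ φ ψ).trans
      ((and_congr (ihφ Δ) (ihψ Δ)).trans hΔ.and_mem_iff.symm)
  case imp φ ψ ihφ ihψ =>
    exact ((canonical CS).sat_imp_iff hΔ φ ψ).trans
      ((imp_congr (ihφ Δ) (ihψ Δ)).trans hΔ.imp_mem_iff.symm)
  case cond φ ψ _ ihψ =>
    refine ((canonical CS).sat_cond_iff hΔ φ ψ).trans (hΔ.cond_mem_iff.trans ?_).symm
    exact ⟨fun h Θ hR => (ihψ Θ).2 (h Θ hR.2.1 hR.2.2),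
      fun h Θ hΘ hsub => (ihψ Θ).1 (h Θ ⟨hΔ, hΘ, hsub⟩)⟩
  case box t φ ih =>
    refine ((canonical CS).sat_box_iff hΔ t φ).trans
      ⟨fun h => (ih _).1 (h _ fun _ => id), fun h Θ hsub => (ih Θ).2 (hsub h)⟩

open LPCplus in
/-- Truth Lemma: in the canonical relational model for LPC⁺_CS,
for every formula φ and every state Γ, M,Γ ⊨ φ iff φ ∈ Γ. -/
theorem stmt_6 (CS : Set Fm) (hCS : IsCS CS) (φ : Fm) (Γ : Set Fm) :
    Sat (canonical CS) φ Γ ↔ φ ∈ Γ :=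
  stmt_6_general CS φ Γ
end

section
/- For every constant specification CS for LPC⁺, the rule RCEA is not validity preserving in LPC⁺_CS: there exist formulas φ, ψ, χ such that ⊨_{LPC⁺_CS} φ ≡ ψ but not ⊨_{LPC⁺_CS} (φ>χ) ≡ (ψ>χ). In particular, for atomic propositions p, q, ⊨_{LPC⁺_CS} p ≡ (p∧p) but not ⊨_{LPC⁺_CS} (p>q) ≡ ((p∧p)>q). -/
/-!
RCEA fails because the selection relation `R_φ` is indexed by the formula `φ` itself, not by
its truth set. Take two states, `p` true only at the second; justification relations are the
identity, and `R_χ(w)` is `{w}` or `∅` according as `w ⊨ χ`, except for one extra edge from the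
first state to the second along `p ∧ p`. Then `p > q` holds vacuously at the first state while
`(p ∧ p) > q` fails there, although `p` and `p ∧ p` are true at the same states. Since every
state is normal, all axioms are true everywhere, so the constant specification is respected.
-/

namespace LPCplus

section NormalState

variable {M : Model} {w : M.W} {φ ψ : Fm}

theorem sat_atom (hw : w ∈ M.N) (p : ℕ) : Sat M (.atom p) w ↔ p ∈ M.Vn w := by
  simp [Sat, hw]

theorem sat_neg (hw : w ∈ M.N) : Sat M φ.neg w ↔ ¬ Sat M φ w := by
  simp [Sat, hw]

theorem sat_and (hw : w ∈ M.N) : Sat M (φ.and ψ) w ↔ Sat M φ w ∧ Sat M ψ w := by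
  simp [Sat, hw]

theorem sat_imp (hw : w ∈ M.N) : Sat M (φ.imp ψ) w ↔ (Sat M φ w → Sat M ψ w) := by
  simp [Sat, hw]

theorem sat_cond (hw : w ∈ M.N) :
    Sat M (φ.cond ψ) w ↔ ∀ v, M.Rf φ w v → Sat M ψ v := by
  simp [Sat, hw]

theorem sat_box (hw : w ∈ M.N) {t : Tm} :
    Sat M (.box t φ) w ↔ ∀ v, M.Rt t w v → Sat M φ v := by
  simp [Sat, hw]

theorem sat_eqv (hw : w ∈ M.N) : Sat M (eqv φ ψ) w ↔ (Sat M φ w ↔ Sat M ψ w) := by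
  simp only [eqv, sat_and hw, sat_imp hw, iff_def]

end NormalState

theorem valid_eqv_and_self (CS : Set Fm) (φ : Fm) : Valid CS (eqv φ (φ.and φ)) :=
  fun _ _ _ hw => (sat_eqv hw).2 (by rw [sat_and hw, and_self])

section AllNormal

variable {M : Model} (hN : ∀ w, w ∈ M.N)
include hN

theorem sat_of_isTaut {φ : Fm} (h : IsTaut φ) (w : M.W) : Sat M φ w := by
  classical
  simpa using h (fun ψ => decide (Sat M ψ w))
    (fun _ => by simp [sat_neg (hN w)]) (fun _ _ => by simp [sat_and (hN w)])
    (fun _ _ => by simp [sat_imp (hN w), imp_iff_not_or])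

/-- `IsModel ∅` is the conjunction of the frame conditions (C1), (C2), (C4)–(C7). Normality of
all states is needed for axiom a9: nothing forces `R_{!t}`-successors to be normal. -/
theorem sat_of_ax (hM : IsModel ∅ M) {φ : Fm} (h : Ax φ) (w : M.W) : Sat M φ w := by
  obtain ⟨hC1, hC2, -, hC4, hC5, hC6, hC7⟩ := hM
  have hC1box : ∀ t φ v u, M.Rf (.box t φ) w v → M.Rt t v u → Sat M φ u :=
    fun _ _ v u hv hu => (sat_box (hN v)).1 (hC1 _ w v (hN w) hv) u hu
  cases h
  case taut h => exact sat_of_isTaut hN h w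
  all_goals simp only [sat_cond, sat_imp, sat_box, hN]
  case a2 => exact fun h₁ h₂ v hv => h₁ v hv (h₂ v hv)
  case a3 φ => exact fun v => hC1 φ w v (hN w)
  case a4 φ ψ => exact fun h hφ => h w (hC2 φ w (hN w) hφ)
  case a5 s t φ ψ => exact fun v hv u hu => hC5 s t v u (hN v) hu φ ψ (hC1 _ w v (hN w) hv)
  case a6 s t φ => exact fun v hv u hu => hC1box s φ v u hv (hC4 s t v u (hN v) hu).1
  case a7 s t φ => exact fun v hv u hu => hC1box t φ v u hv (hC4 s t v u (hN v) hu).2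
  case a8 t φ => exact fun v hv => hC1box t φ v v hv (hC6 t v (hN v))
  case a9 t φ => exact fun v hv u hu x hx => hC1box t φ v x hv (hC7 t v u x (hN v) hu hx)

theorem IsModel.of_isModel_empty {CS : Set Fm} (hCS : IsCS CS) (hM : IsModel ∅ M) :
    IsModel CS M := by
  refine ⟨hM.1, hM.2.1, fun c φ hc w v _ _ => ?_, hM.2.2.2⟩
  obtain ⟨c, φ, hφ, hax⟩ := hCS _ hc
  cases hφ
  exact sat_of_ax hN hM hax v

end AllNormal

section IdModel

variable {W : Type} (V : W → Set ℕ) (E : Fm → W → W → Prop)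

/-- Truth in `idModel V E`. (C1) and (C2) make `R_φ` depend on the truth set of `φ`, so truth
is computed by recursion on formulas before the model is built. -/
def IdTruth : Fm → W → Prop
  | .atom p, w => p ∈ V w
  | .neg φ, w => ¬ IdTruth φ w
  | .and φ ψ, w => IdTruth φ w ∧ IdTruth ψ w
  | .imp φ ψ, w => IdTruth φ w → IdTruth ψ w
  | .cond φ ψ, w => ∀ v, (v = w ∧ IdTruth φ w ∨ E φ w v) → IdTruth ψ v
  | .box _ φ, w => IdTruth φ w

def idModel : Model where
  W := W
  N := Set.univ
  Rf φ w v := v = w ∧ IdTruth V E φ w ∨ E φ w v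
  Rf_norm _ _ _ _ := ⟨trivial, trivial⟩
  Rt _ w v := v = w
  Vn := V
  Vf _ := ∅

theorem mem_N_idModel (w : W) : w ∈ (idModel V E).N := trivial

theorem sat_idModel_iff (φ : Fm) (w : W) : Sat (idModel V E) φ w ↔ IdTruth V E φ w := by
  have hN := mem_N_idModel V E
  induction φ generalizing w with
  | atom p => exact sat_atom (hN w) p
  | neg φ ih => exact (sat_neg (hN w)).trans (ih w).not
  | and φ ψ ihφ ihψ => exact (sat_and (hN w)).trans (and_congr (ihφ w) (ihψ w))
  | imp φ ψ ihφ ihψ => exact (sat_imp (hN w)).trans (imp_congr (ihφ w) (ihψ w))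
  | cond φ ψ _ ihψ => exact (sat_cond (hN w)).trans (forall_congr' fun v => imp_congr_right
      fun _ => ihψ v)
  | box t φ ih =>
    rw [sat_box (hN w)]
    exact ⟨fun h => (ih w).1 (h w rfl), fun h v hv => hv ▸ (ih w).2 h⟩

theorem isModel_idModel (hE : ∀ φ w v, E φ w v → IdTruth V E φ v) :
    IsModel ∅ (idModel V E) := by
  refine ⟨?C1, fun φ w _ hφ => .inl ⟨rfl, (sat_idModel_iff V E φ w).1 hφ⟩,
    fun _ _ h => h.elim, fun _ _ _ _ _ h => ⟨h, h⟩, ?C5, fun _ _ _ => rfl,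
    fun _ _ _ _ _ hv hu => hu.trans hv⟩
  case C1 =>
    rintro φ w v - (⟨rfl, hφ⟩ | hwv)
    exacts [(sat_idModel_iff V E φ v).2 hφ, (sat_idModel_iff V E φ v).2 (hE φ w v hwv)]
  case C5 =>
    rintro s t w v - rfl φ ψ h
    obtain ⟨hφψ, hφ⟩ : IdTruth V E (φ.cond ψ) v ∧ IdTruth V E φ v :=
      (sat_idModel_iff V E _ v).1 h
    exact (sat_idModel_iff V E ψ v).2 (hφψ v (.inl ⟨rfl, hφ⟩))

end IdModel

section Countermodel

variable (p : ℕ)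

abbrev rceaCountermodel : Model :=
  idModel (W := Bool) (fun w => {n | n = p ∧ w = true})
    (fun φ w v => φ = (Fm.atom p).and (Fm.atom p) ∧ w = false ∧ v = true)

theorem isModel_rceaCountermodel {CS : Set Fm} (hCS : IsCS CS) :
    IsModel CS (rceaCountermodel p) :=
  IsModel.of_isModel_empty (mem_N_idModel _ _) hCS <| isModel_idModel _ _ <| by
    rintro φ w v ⟨rfl, -, rfl⟩
    exact ⟨⟨rfl, rfl⟩, ⟨rfl, rfl⟩⟩

theorem not_valid_eqv_cond_atom_and_cond {CS : Set Fm} (hCS : IsCS CS) {q : ℕ} (hpq : p ≠ q) :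
    ¬ Valid CS (eqv ((Fm.atom p).cond (Fm.atom q))
      (((Fm.atom p).and (Fm.atom p)).cond (Fm.atom q))) := by
  intro hvalid
  have h := (sat_eqv (mem_N_idModel _ _ _)).1
    (hvalid _ (isModel_rceaCountermodel p hCS) false (mem_N_idModel _ _ _))
  rw [sat_idModel_iff, sat_idModel_iff] at h
  simp [IdTruth, hpq.symm] at h

end Countermodel

end LPCplus

open LPCplus in
/-- The rule RCEA is not validity preserving in LPC⁺_CS;
in particular it fails for φ = p, ψ = p∧p, χ = q (p, q distinct atoms). -/
theorem stmt_12 (CS : Set Fm) (hCS : IsCS CS) :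
    (∃ φ ψ χ : Fm,
        Valid CS (eqv φ ψ) ∧ ¬ Valid CS (eqv (φ.cond χ) (ψ.cond χ))) ∧
    (∀ p q : ℕ, p ≠ q →
        Valid CS (eqv (Fm.atom p) ((Fm.atom p).and (Fm.atom p))) ∧
        ¬ Valid CS (eqv ((Fm.atom p).cond (Fm.atom q))
            (((Fm.atom p).and (Fm.atom p)).cond (Fm.atom q)))) :=
  ⟨⟨_, _, _, valid_eqv_and_self CS _, not_valid_eqv_cond_atom_and_cond 0 hCS zero_ne_one⟩,
    fun p _ hpq => ⟨valid_eqv_and_self CS _, not_valid_eqv_cond_atom_and_cond p hCS hpq⟩⟩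
end

section
/- Variable-sharing property for the relevant counterfactual: if ⊨_JRC φ ⇝ ψ, then φ and ψ have at least one atomic proposition in common. -/
namespace JRC

/-- JRC justification terms: variables and sums. -/
inductive Tm : Type
  | var : ℕ → Tm
  | sum : Tm → Tm → Tm
  deriving DecidableEq

/-- JRC formulas: atoms, intensional negation ∼, ∧, relevant conditional →,
relevant counterfactual ⇝, and justification assertions [t]φ. -/
inductive Fm : Type
  | atom : ℕ → Fm
  | snot : Fm → Fm          -- ∼φ
  | and  : Fm → Fm → Fm
  | rimp : Fm → Fm → Fm     -- φ → ψ (relevant conditional)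
  | cond : Fm → Fm → Fm     -- φ ⇝ ψ (relevant counterfactual)
  | box  : Tm → Fm → Fm
  deriving DecidableEq

/-- Extensional disjunction φ ∨ ψ := ∼(∼φ ∧ ∼ψ). -/
def orF (φ ψ : Fm) : Fm := Fm.snot ((Fm.snot φ).and (Fm.snot ψ))

/-- A Routley relational model. -/
structure Model where
  W : Type
  N : Set W
  N_nonempty : N.Nonempty
  R : W → W → W → Prop
  normality : ∀ w v u : W, w ∈ N → (R w v u ↔ v = u)
  Rf : Fm → W → W → Prop
  Rt : Tm → W → W → Prop
  star : W → W
  star_star : ∀ w : W, star (star w) = w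
  V : ℕ → Set W

/-- Truth at a state of a Routley relational model. -/
def Sat (M : Model) : Fm → M.W → Prop
  | .atom p, w => w ∈ M.V p
  | .snot φ, w => ¬ Sat M φ (M.star w)
  | .and φ ψ, w => Sat M φ w ∧ Sat M ψ w
  | .rimp φ ψ, w => ∀ v u : M.W, M.R w v u → Sat M φ v → Sat M ψ u
  | .cond φ ψ, w => ∀ v : M.W, M.Rf φ w v → Sat M ψ v
  | .box t φ, w => ∀ v : M.W, M.Rt t w v → Sat M φ v

/-- The conditions making a Routley relational model a JRC-model. -/
def IsModel (M : Model) : Prop :=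
  (∀ φ (w : M.W), w ∈ M.N → ∀ v, M.Rf φ w v → Sat M φ v) ∧
  (∀ φ (w : M.W), Sat M φ w → M.Rf φ w w) ∧
  (∀ (s t : Tm) (w v : M.W), M.Rt (s.sum t) w v → M.Rt s w v ∧ M.Rt t w v)

/-- JRC-validity. -/
def Valid (φ : Fm) : Prop :=
  ∀ M : Model, IsModel M → ∀ w ∈ M.N, Sat M φ w

/-- Local semantic consequence in JRC. -/
def Conseq (T : Set Fm) (φ : Fm) : Prop :=
  ∀ M : Model, IsModel M → ∀ w ∈ M.N, (∀ ψ ∈ T, Sat M ψ w) → Sat M φ w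

/-- The set of atomic propositions occurring in a formula. -/
def atoms : Fm → Set ℕ
  | .atom p => {p}
  | .snot φ => atoms φ
  | .and φ ψ => atoms φ ∪ atoms ψ
  | .rimp φ ψ => atoms φ ∪ atoms ψ
  | .cond φ ψ => atoms φ ∪ atoms ψ
  | .box _ φ => atoms φ

end JRC

/-!
Build, for a set `A` of atoms, a JRC-model with one normal state `n` and a Routley pair
`a* = b`, in which the atoms of `A` hold exactly at `a` and the other atoms exactly at `b`.
At a non-normal state `x` every conditional and counterfactual is evaluated at the pair
`{x, x*}` only, so a formula all of whose atoms hold at `x` is true at `x` and false at `x*`.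
Taking `A` to be the atoms of `φ`, the state `a` verifies `φ`; if `ψ` shared no atom with `φ`,
all atoms of `ψ` would hold at `b`, so `ψ` would fail at `b* = a`. As `R_φ(n) = ‖φ‖`, this
refutes `φ ⇝ ψ` at `n`.
-/

namespace JRC.PairModel

inductive State : Type
  | n | a | b
  deriving DecidableEq

def State.star : State → State
  | .n => .n
  | .a => .b
  | .b => .a

@[simp]
theorem State.star_star (x : State) : x.star.star = x := by
  cases x <;> rfl

def R : State → State → State → Prop
  | .n, v, u => v = u
  | x, v, u => v = x.star ∧ u = x

theorem R_of_ne_n {x : State} (hx : x ≠ .n) (v u : State) :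
    R x v u ↔ v = x.star ∧ u = x := by
  cases x <;> simp_all [R]

/-- `R_φ` for `‖φ‖ = P`: all of `P` seen from the normal state, a loop elsewhere. -/
def condRel (P : State → Prop) : State → State → Prop
  | .n, v => P v
  | x, v => v = x

theorem condRel_of_ne_n (P : State → Prop) {x : State} (hx : x ≠ .n) (v : State) :
    condRel P x v ↔ v = x := by
  cases x <;> simp_all [condRel]

/-- Truth in the model, defined before the model itself so that `R_φ` can mention it. -/
def val (A : Set ℕ) : Fm → State → Prop
  | .atom p, x => (x = .a ∧ p ∈ A) ∨ (x = .b ∧ p ∉ A)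
  | .snot χ, x => ¬ val A χ x.star
  | .and χ ξ, x => val A χ x ∧ val A ξ x
  | .rimp χ ξ, x => ∀ v u, R x v u → val A χ v → val A ξ u
  | .cond χ ξ, x => ∀ v, condRel (val A χ) x v → val A ξ v
  | .box _ χ, x => val A χ x

def model (A : Set ℕ) : Model where
  W := State
  N := {.n}
  N_nonempty := ⟨.n, rfl⟩
  R := R
  normality := by
    rintro w v u rfl
    rfl
  Rf χ := condRel (val A χ)
  Rt _ x v := v = x
  star := State.star
  star_star := State.star_star
  V p := {x | val A (.atom p) x}

theorem sat_model_iff (A : Set ℕ) (χ : Fm) (x : State) : Sat (model A) χ x ↔ val A χ x := by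
  induction χ generalizing x with
  | atom p => rfl
  | snot χ ih => exact not_congr (ih _)
  | and χ ξ ih₁ ih₂ => exact and_congr (ih₁ x) (ih₂ x)
  | rimp χ ξ ih₁ ih₂ =>
    exact forall₂_congr fun v u => imp_congr_right fun _ => imp_congr (ih₁ v) (ih₂ u)
  | cond χ ξ _ ih₂ => exact forall_congr' fun v => imp_congr_right fun _ => ih₂ v
  | box t χ ih => exact ⟨fun h => (ih x).1 (h x rfl), fun h v hv => hv ▸ (ih x).2 h⟩

theorem isModel_model (A : Set ℕ) : IsModel (model A) := by
  refine ⟨?_, ?_, fun _ _ _ _ h => ⟨h, h⟩⟩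
  · rintro χ w rfl v hv
    exact (sat_model_iff A χ v).2 hv
  · intro χ w hw
    cases w
    · exact (sat_model_iff A χ _).1 hw
    all_goals rfl

theorem val_of_valid_cond {φ ψ : Fm} (h : Valid (φ.cond ψ)) (A : Set ℕ) {x : State}
    (hφ : val A φ x) : val A ψ x :=
  (sat_model_iff A ψ x).1 <| h (model A) (isModel_model A) .n rfl x hφ

theorem val_and_not_val_star (A : Set ℕ) (χ : Fm) {x : State} (hx : x ≠ .n)
    (hatoms : ∀ p ∈ atoms χ, val A (.atom p) x) : val A χ x ∧ ¬ val A χ x.star := by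
  have hxs : x.star ≠ .n := by cases x <;> simp_all [State.star]
  induction χ generalizing x with
  | atom p =>
    have hp := hatoms p rfl
    refine ⟨hp, ?_⟩
    cases x <;> simp_all [val, State.star]
  | snot χ ih =>
    obtain ⟨h₁, h₂⟩ := ih hx hatoms hxs
    exact ⟨h₂, by simpa [val] using h₁⟩
  | and χ ξ ih₁ ih₂ =>
    obtain ⟨h₁, h₂⟩ := ih₁ hx (fun p hp => hatoms p (Or.inl hp)) hxs
    obtain ⟨h₃, _⟩ := ih₂ hx (fun p hp => hatoms p (Or.inr hp)) hxs
    exact ⟨⟨h₁, h₃⟩, fun h => h₂ h.1⟩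
  | rimp χ ξ ih₁ ih₂ =>
    obtain ⟨h₁, -⟩ := ih₁ hx (fun p hp => hatoms p (Or.inl hp)) hxs
    obtain ⟨h₃, h₄⟩ := ih₂ hx (fun p hp => hatoms p (Or.inr hp)) hxs
    refine ⟨fun v u hR _ => ?_, fun h => h₄ (h x x.star ?_ h₁)⟩
    · obtain ⟨-, rfl⟩ := (R_of_ne_n hx v u).1 hR
      exact h₃
    · simp [R_of_ne_n hxs]
  | cond χ ξ _ ih₂ =>
    obtain ⟨h₃, h₄⟩ := ih₂ hx (fun p hp => hatoms p (Or.inr hp)) hxs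
    refine ⟨fun v hv => ?_, fun h => h₄ (h x.star ((condRel_of_ne_n _ hxs _).2 rfl))⟩
    rw [(condRel_of_ne_n _ hx v).1 hv]
    exact h₃
  | box t χ ih => exact ih hx hatoms hxs

end JRC.PairModel

open JRC in
/-- Variable-sharing property: if ⊨_JRC φ ⇝ ψ, then φ and ψ
share at least one atomic proposition. -/
theorem stmt_16 (φ ψ : Fm) (h : Valid (φ.cond ψ)) :
    ∃ p : ℕ, p ∈ atoms φ ∧ p ∈ atoms ψ := by
  open PairModel in
  by_contra! hdisj
  let A := atoms φ
  have hφ : val A φ .a :=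
    (val_and_not_val_star A φ (by decide) fun p hp => .inl ⟨rfl, hp⟩).1
  have hψ : ¬ val A ψ .a :=
    (val_and_not_val_star A ψ (x := .b) (by decide)
      fun p hp => .inr ⟨rfl, fun hpA => hdisj p hpA hp⟩).2
  exact hψ (val_of_valid_cond h A hφ)
end

section
/- Soundness of the JRC tableau system: for every finite set of premises T and formula φ, if T ⊢_JRC φ (there is a closed tableau for φ from T), then T ⊨_JRC φ. -/
namespace JRC

/-- Tableau labels: `(i, false)` is the integer label `i`, `(i, true)` is `i♯`. -/
abbrev Label := ℕ × Bool

/-- The label 0. -/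
def Label.zero : Label := (0, false)

/-- x̄ : swap `i` and `i♯`. -/
def Label.flip (x : Label) : Label := (x.1, !x.2)

/-- Nodes of a JRC tableau. -/
inductive Node : Type
  | pos : Fm → Label → Node          -- φ, +x
  | neg : Fm → Label → Node          -- φ, −x
  | rf  : Fm → Label → Label → Node  -- x r_φ y
  | rt  : Tm → Label → Label → Node  -- x r_t y
  | r3  : Label → Label → Label → Node  -- rxyz
  deriving DecidableEq

/-- The labels occurring in a node. -/
def Node.labels : Node → Finset Label
  | .pos _ x => {x}
  | .neg _ x => {x}
  | .rf _ x y => {x, y}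
  | .rt _ x y => {x, y}
  | .r3 x y z => {x, y, z}

/-- The labels occurring on a branch. -/
def branchLabels (S : Finset Node) : Finset Label := S.biUnion Node.labels

/-- The integer `j` is fresh (new) for the branch `S`. -/
def FreshNat (j : ℕ) (S : Finset Node) : Prop :=
  ∀ b : Bool, ((j, b) : Label) ∉ branchLabels S

/-- φ occurs as the antecedent of a conditional ⇝ at a node of the branch. -/
def IsAntecedent (φ : Fm) (S : Finset Node) : Prop :=
  ∃ (ψ : Fm) (x : Label), Node.pos (φ.cond ψ) x ∈ S ∨ Node.neg (φ.cond ψ) x ∈ S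

/-- `Closes S`: the branch `S` can be extended, by the JRC tableau rules, to a
closed tableau (every branch contains some φ,+x together with φ,−x). -/
inductive Closes : Finset Node → Prop
  | contra {S : Finset Node} {φ x} :
      Node.pos φ x ∈ S → Node.neg φ x ∈ S → Closes S
  | tNeg {S φ x} : Node.pos (Fm.snot φ) x ∈ S →
      Closes (insert (Node.neg φ x.flip) S) → Closes S
  | fNeg {S φ x} : Node.neg (Fm.snot φ) x ∈ S →
      Closes (insert (Node.pos φ x.flip) S) → Closes S
  | tAnd {S φ ψ x} : Node.pos (φ.and ψ) x ∈ S →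
      Closes (insert (Node.pos φ x) (insert (Node.pos ψ x) S)) → Closes S
  | fAnd {S φ ψ x} : Node.neg (φ.and ψ) x ∈ S →
      Closes (insert (Node.neg φ x) S) →
      Closes (insert (Node.neg ψ x) S) → Closes S
  | tImp {S φ ψ x y z} : Node.pos (φ.rimp ψ) x ∈ S → Node.r3 x y z ∈ S →
      Closes (insert (Node.neg φ y) S) →
      Closes (insert (Node.pos ψ z) S) → Closes S
  | fImp {S φ ψ x} {j k : ℕ} : Node.neg (φ.rimp ψ) x ∈ S →
      FreshNat j S → FreshNat k S →
      (x = Label.zero → j = k) → (x ≠ Label.zero → j ≠ k) →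
      Closes (insert (Node.r3 x (j, false) (k, false))
        (insert (Node.pos φ (j, false)) (insert (Node.neg ψ (k, false)) S))) →
      Closes S
  | tCond {S φ ψ x y} : Node.pos (φ.cond ψ) x ∈ S → Node.rf φ x y ∈ S →
      Closes (insert (Node.pos ψ y) S) → Closes S
  | fCond {S φ ψ x} {j : ℕ} : Node.neg (φ.cond ψ) x ∈ S → x ≠ Label.zero →
      FreshNat j S →
      Closes (insert (Node.rf φ x (j, false)) (insert (Node.neg ψ (j, false)) S)) →
      Closes S
  | fCondZero {S φ ψ} {j : ℕ} : Node.neg (φ.cond ψ) Label.zero ∈ S →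
      FreshNat j S →
      Closes (insert (Node.rf φ Label.zero (j, false))
        (insert (Node.pos φ (j, false)) (insert (Node.neg ψ (j, false)) S))) →
      Closes S
  | tBox {S t φ x y} : Node.pos (Fm.box t φ) x ∈ S → Node.rt t x y ∈ S →
      Closes (insert (Node.pos φ y) S) → Closes S
  | fBox {S t φ x} {j : ℕ} : Node.neg (Fm.box t φ) x ∈ S →
      FreshNat j S →
      Closes (insert (Node.rt t x (j, false)) (insert (Node.neg φ (j, false)) S)) →
      Closes S
  | cutR {S φ x} : IsAntecedent φ S → x ∈ branchLabels S →
      Closes (insert (Node.neg φ x) S) →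
      Closes (insert (Node.pos φ x) (insert (Node.rf φ x x) S)) → Closes S
  | rPlus {S s t x y} : Node.rt (Tm.sum s t) x y ∈ S →
      Closes (insert (Node.rt s x y) (insert (Node.rt t x y) S)) → Closes S
  | norm {S : Finset Node} {x} : x ∈ branchLabels S →
      Closes (insert (Node.r3 Label.zero x x) S) → Closes S

/-- T ⊢_JRC φ: there is a closed tableau whose root consists of ψ,+0 for every
premise ψ ∈ T together with φ,−0. -/
def TabProv (T : Finset Fm) (φ : Fm) : Prop :=
  Closes (insert (Node.neg φ Label.zero) (T.image (fun ψ => Node.pos ψ Label.zero)))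

end JRC
/-!
A branch is *realized* by an assignment of worlds to the integer labels (the label `i♯` denoting
the star of the world of `i`) that sends `0` to a normal world and makes every node of the branch
true. Every tableau rule turns a realized branch into a realized child: fresh labels are sent to
the witnesses of the falsified conditional or justification assertion, and the model conditions
validate the rules `F⇝₀`, `Cut_r` and `r₊`. A closed branch is not realized, whereas a normal
world satisfying `T` but not `φ` realizes the root.
-/

namespace JRC

variable {M : Model}

def interp (g : ℕ → M.W) (x : Label) : M.W :=
  if x.2 then M.star (g x.1) else g x.1

@[simp]
lemma interp_zero (g : ℕ → M.W) : interp g Label.zero = g 0 := rfl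

@[simp]
lemma interp_flip (g : ℕ → M.W) (x : Label) : interp g x.flip = M.star (interp g x) := by
  rcases x with ⟨i, _ | _⟩ <;> simp [interp, Label.flip, M.star_star]

lemma interp_update_of_ne {g : ℕ → M.W} {j : ℕ} {w : M.W} {x : Label} (hx : x.1 ≠ j) :
    interp (Function.update g j w) x = interp g x := by
  simp only [interp, Function.update_of_ne hx]

@[simp]
lemma interp_update_self (g : ℕ → M.W) (j : ℕ) (w : M.W) :
    interp (Function.update g j w) (j, false) = w := by
  simp [interp]

lemma interp_update_update_left {g : ℕ → M.W} {j k : ℕ} {v u : M.W} (hvu : j = k → v = u) :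
    interp (Function.update (Function.update g j v) k u) (j, false) = v := by
  by_cases hjk : j = k
  · subst hjk
    simp [hvu rfl]
  · rw [interp_update_of_ne (x := (j, false)) hjk, interp_update_self]

def SatNode (g : ℕ → M.W) : Node → Prop
  | .pos φ x => Sat M φ (interp g x)
  | .neg φ x => ¬ Sat M φ (interp g x)
  | .rf φ x y => M.Rf φ (interp g x) (interp g y)
  | .rt t x y => M.Rt t (interp g x) (interp g y)
  | .r3 x y z => M.R (interp g x) (interp g y) (interp g z)

lemma mem_branchLabels_of_mem {S : Finset Node} {n : Node} {x : Label} (hn : n ∈ S)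
    (hx : x ∈ n.labels) : x ∈ branchLabels S :=
  Finset.mem_biUnion.mpr ⟨n, hn, hx⟩

lemma FreshNat.fst_ne {j : ℕ} {S : Finset Node} (hf : FreshNat j S) {x : Label}
    (hx : x ∈ branchLabels S) : x.1 ≠ j := by
  rintro rfl
  exact hf x.2 hx

lemma SatNode.update_of_fresh {g : ℕ → M.W} {j : ℕ} {w : M.W} {n : Node}
    (hj : ∀ x ∈ n.labels, x.1 ≠ j) (h : SatNode g n) : SatNode (Function.update g j w) n := by
  cases n <;>
    simp only [Node.labels, Finset.mem_insert, Finset.mem_singleton, forall_eq_or_imp,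
      forall_eq] at hj <;>
    simpa only [SatNode, interp_update_of_ne, hj, ne_eq, not_false_eq_true] using h

/-- The label `0` is required to occur on the branch so that a fresh integer is never `0`. -/
structure Realizes (g : ℕ → M.W) (S : Finset Node) : Prop where
  zero_mem : Label.zero ∈ branchLabels S
  zero_mem_N : g 0 ∈ M.N
  sat : ∀ n ∈ S, SatNode g n

namespace Realizes

variable {g : ℕ → M.W} {S : Finset Node}

lemma insert (h : Realizes g S) {n : Node} (hn : SatNode g n) : Realizes g (insert n S) where
  zero_mem := Finset.biUnion_subset_biUnion_of_subset_left _ (Finset.subset_insert _ _) h.zero_mem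
  zero_mem_N := h.zero_mem_N
  sat := Finset.forall_mem_insert _ _ _ |>.mpr ⟨hn, h.sat⟩

lemma update {j : ℕ} (h : Realizes g S) (hf : FreshNat j S) (w : M.W) :
    Realizes (Function.update g j w) S where
  zero_mem := h.zero_mem
  zero_mem_N := by
    rw [Function.update_of_ne (show 0 ≠ j from hf.fst_ne h.zero_mem)]
    exact h.zero_mem_N
  sat n hn := (h.sat n hn).update_of_fresh fun _ hx => hf.fst_ne (mem_branchLabels_of_mem hn hx)

end Realizes

section FreshRules

variable {g : ℕ → M.W} {S : Finset Node} {x : Label} {j : ℕ}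

lemma exists_realizes_fImp {φ ψ : Fm} {k : ℕ} (h : Realizes g S)
    (h1 : Node.neg (φ.rimp ψ) x ∈ S) (hfj : FreshNat j S) (hfk : FreshNat k S)
    (hne : x ≠ Label.zero → j ≠ k) :
    ∃ g' : ℕ → M.W, Realizes g' (insert (Node.r3 x (j, false) (k, false))
      (insert (Node.pos φ (j, false)) (insert (Node.neg ψ (k, false)) S))) := by
  obtain ⟨v, u, hR, hv, hu⟩ :
      ∃ v u, M.R (interp g x) v u ∧ Sat M φ v ∧ ¬ Sat M ψ u := by
    simpa [SatNode, Sat] using h.sat _ h1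
  -- `j = k` only when the rule is applied at `0`, where normality makes `R` the identity
  have hvu : j = k → v = u := fun hjk => by
    by_cases hx : x = Label.zero
    · rw [hx] at hR
      exact (M.normality _ _ _ h.zero_mem_N).mp hR
    · exact absurd hjk (hne hx)
  have hx : x ∈ branchLabels S := mem_branchLabels_of_mem h1 (by simp [Node.labels])
  set g' := Function.update (Function.update g j v) k u
  have hxg' : interp g' x = interp g x := by
    rw [interp_update_of_ne (hfk.fst_ne hx), interp_update_of_ne (hfj.fst_ne hx)]
  refine ⟨g', ((((h.update hfj v).update hfk u).insert ?_).insert ?_).insert ?_⟩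
  · simpa [SatNode, g'] using hu
  · simpa [SatNode, interp_update_update_left hvu] using hv
  · simpa [SatNode, hxg', interp_update_update_left hvu, g'] using hR

lemma exists_realizes_fCond {φ ψ : Fm} (h : Realizes g S) (h1 : Node.neg (φ.cond ψ) x ∈ S)
    (hf : FreshNat j S) :
    ∃ g' : ℕ → M.W,
      Realizes g' (insert (Node.rf φ x (j, false)) (insert (Node.neg ψ (j, false)) S)) := by
  obtain ⟨v, hRf, hv⟩ : ∃ v, M.Rf φ (interp g x) v ∧ ¬ Sat M ψ v := by
    simpa [SatNode, Sat] using h.sat _ h1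
  have hx : x.1 ≠ j := hf.fst_ne (mem_branchLabels_of_mem h1 (by simp [Node.labels]))
  exact ⟨_, ((h.update hf v).insert (by simpa [SatNode] using hv)).insert
    (by simpa [SatNode, interp_update_of_ne hx] using hRf)⟩

lemma exists_realizes_fCondZero (hM : IsModel M) {φ ψ : Fm} (h : Realizes g S)
    (h1 : Node.neg (φ.cond ψ) Label.zero ∈ S) (hf : FreshNat j S) :
    ∃ g' : ℕ → M.W, Realizes g' (insert (Node.rf φ Label.zero (j, false))
      (insert (Node.pos φ (j, false)) (insert (Node.neg ψ (j, false)) S))) := by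
  obtain ⟨v, hRf, hv⟩ : ∃ v, M.Rf φ (g 0) v ∧ ¬ Sat M ψ v := by
    simpa [SatNode, Sat] using h.sat _ h1
  have h0 := hf.fst_ne h.zero_mem
  exact ⟨_, (((h.update hf v).insert (by simpa [SatNode] using hv)).insert
    (by simpa [SatNode] using hM.1 φ _ h.zero_mem_N v hRf)).insert
    (by simpa [SatNode, interp_update_of_ne h0] using hRf)⟩

lemma exists_realizes_fBox {t : Tm} {φ : Fm} (h : Realizes g S)
    (h1 : Node.neg (Fm.box t φ) x ∈ S) (hf : FreshNat j S) :
    ∃ g' : ℕ → M.W,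
      Realizes g' (insert (Node.rt t x (j, false)) (insert (Node.neg φ (j, false)) S)) := by
  obtain ⟨v, hRt, hv⟩ : ∃ v, M.Rt t (interp g x) v ∧ ¬ Sat M φ v := by
    simpa [SatNode, Sat] using h.sat _ h1
  have hx : x.1 ≠ j := hf.fst_ne (mem_branchLabels_of_mem h1 (by simp [Node.labels]))
  exact ⟨_, ((h.update hf v).insert (by simpa [SatNode] using hv)).insert
    (by simpa [SatNode, interp_update_of_ne hx] using hRt)⟩

end FreshRules

theorem Closes.not_realizes (hM : IsModel M) {S : Finset Node} (h : Closes S) :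
    ∀ g : ℕ → M.W, ¬ Realizes g S := by
  induction h with
  | contra hpos hneg => exact fun g hg => hg.sat _ hneg (hg.sat _ hpos)
  | tNeg h1 _ ih => exact fun g hg => ih g (hg.insert (by simpa [SatNode, Sat] using hg.sat _ h1))
  | fNeg h1 _ ih => exact fun g hg => ih g (hg.insert (by simpa [SatNode, Sat] using hg.sat _ h1))
  | tAnd h1 _ ih =>
      intro g hg
      obtain ⟨hφ, hψ⟩ := hg.sat _ h1
      refine ih g (.insert (.insert hg ?_) ?_)
      exacts [hψ, hφ]
  | fAnd h1 _ _ ih₁ ih₂ =>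
      intro g hg
      rcases not_and_or.mp (hg.sat _ h1) with hφ | hψ
      · exact ih₁ g (hg.insert hφ)
      · exact ih₂ g (hg.insert hψ)
  | @tImp S φ ψ x y z h1 h2 _ _ ih₁ ih₂ =>
      intro g hg
      by_cases hφ : Sat M φ (interp g y)
      · exact ih₂ g (hg.insert (hg.sat _ h1 _ _ (hg.sat _ h2) hφ))
      · exact ih₁ g (hg.insert hφ)
  | fImp h1 hfj hfk _ hne _ ih =>
      exact fun g hg => (exists_realizes_fImp hg h1 hfj hfk hne).elim ih
  | tCond h1 h2 _ ih => exact fun g hg => ih g (hg.insert (hg.sat _ h1 _ (hg.sat _ h2)))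
  | fCond h1 _ hf _ ih => exact fun g hg => (exists_realizes_fCond hg h1 hf).elim ih
  | fCondZero h1 hf _ ih => exact fun g hg => (exists_realizes_fCondZero hM hg h1 hf).elim ih
  | tBox h1 h2 _ ih => exact fun g hg => ih g (hg.insert (hg.sat _ h1 _ (hg.sat _ h2)))
  | fBox h1 hf _ ih => exact fun g hg => (exists_realizes_fBox hg h1 hf).elim ih
  | @cutR S φ x _ _ _ _ ih₁ ih₂ =>
      intro g hg
      by_cases hφ : Sat M φ (interp g x)
      · refine ih₂ g (.insert (.insert hg ?_) ?_)
        exacts [hM.2.1 φ _ hφ, hφ]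
      · exact ih₁ g (hg.insert hφ)
  | rPlus h1 _ ih =>
      intro g hg
      obtain ⟨hs, ht⟩ := hM.2.2 _ _ _ _ (hg.sat _ h1)
      refine ih g (.insert (.insert hg ?_) ?_)
      exacts [ht, hs]
  | norm _ _ ih => exact fun g hg => ih g (hg.insert ((M.normality _ _ _ hg.zero_mem_N).mpr rfl))

lemma realizes_root {T : Finset Fm} {φ : Fm} {w : M.W} (hw : w ∈ M.N)
    (hT : ∀ ψ ∈ T, Sat M ψ w) (hφ : ¬ Sat M φ w) :
    Realizes (fun _ => w)
      (insert (Node.neg φ Label.zero) (T.image fun ψ => Node.pos ψ Label.zero)) where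
  zero_mem := mem_branchLabels_of_mem (Finset.mem_insert_self _ _) (by simp [Node.labels])
  zero_mem_N := hw
  sat := Finset.forall_mem_insert _ _ _ |>.mpr ⟨hφ, Finset.forall_mem_image.mpr hT⟩

end JRC

open JRC in
/-- Soundness of the JRC tableau system: if there is a closed tableau
for φ from the finite set of premises T, then T ⊨_JRC φ. -/
theorem stmt_17 (T : Finset Fm) (φ : Fm) (h : TabProv T φ) :
    Conseq (↑T : Set Fm) φ := by
  intro M hM w hw hT
  by_contra hφ
  exact h.not_realizes hM _ (realizes_root hw hT hφ)
end

section
/- Completeness of the JRC tableau system: for every finite set of premises T and formula φ, if T ⊨_JRC φ, then T ⊢_JRC φ (there is a closed tableau for φ from T). -/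
/-!
If no closed tableau exists, the rules can be applied fairly to the root, always keeping a branch
that does not close; the limit `B` of this branch is open and saturated under every rule (a
Hintikka set). Its labels carry a countermodel: `0` is the normal state, `x* = x̄` whenever `x̄`
occurs, `R` and `R_t` are read off the relational nodes, and `R_φ x y` holds on `x r_φ y` nodes and
when `x = y` with `φ` true at `x`. The cut rule on antecedents of `⇝` is what makes the positive
counterfactual nodes true under this last clause. A truth lemma then makes every `ψ,+x` node true and
every `ψ,−x` node false at `x`, so the premises hold at `0` and `φ` fails there.
-/

section FairSaturation

variable {α τ : Type*} [Countable τ] [Nonempty τ]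

theorem exists_saturated_of_step (good : Finset α → Prop) (pre done : τ → Set α → Prop)
    (pre_mono : ∀ t, Monotone (pre t)) (done_mono : ∀ t, Monotone (done t))
    (pre_finite : ∀ t B, pre t B → ∃ F : Finset α, ↑F ⊆ B ∧ pre t ↑F)
    (step : ∀ t S, good S → pre t ↑S → ∃ S', S ⊆ S' ∧ good S' ∧ done t ↑S')
    {S₀ : Finset α} (h₀ : good S₀) :
    ∃ B : Set α, ↑S₀ ⊆ B ∧ (∀ F : Finset α, ↑F ⊆ B → ∃ S, F ⊆ S ∧ ↑S ⊆ B ∧ good S) ∧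
      ∀ t, pre t B → done t B := by
  classical
  have step' : ∀ t S, ∃ S', S ⊆ S' ∧ (good S → good S' ∧ (pre t ↑S → done t ↑S')) := by
    intro t S
    by_cases h : good S ∧ pre t ↑S
    · obtain ⟨S', hsub, hgood, hdone⟩ := step t S h.1 h.2
      exact ⟨S', hsub, fun _ => ⟨hgood, fun _ => hdone⟩⟩
    · exact ⟨S, subset_rfl, fun hS => ⟨hS, fun hp => absurd ⟨hS, hp⟩ h⟩⟩
  choose next hnext_sub hnext using step'
  obtain ⟨e, he⟩ := exists_surjective_nat τ
  -- stage `n + 1` serves the task `e n.unpair.1`, so every task is served after every stage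
  obtain ⟨C, hC_zero, hC_succ⟩ : ∃ C : ℕ → Finset α,
      C 0 = S₀ ∧ ∀ n, C (n + 1) = next (e n.unpair.1) (C n) :=
    ⟨fun n => Nat.rec S₀ (fun k S => next (e k.unpair.1) S) n, rfl, fun _ => rfl⟩
  have hC_mono : Monotone C := monotone_nat_of_le_succ fun n => hC_succ n ▸ hnext_sub _ _
  have hC_good : ∀ n, good (C n) := by
    intro n
    induction n with
    | zero => exact hC_zero ▸ h₀
    | succ n ih => exact hC_succ n ▸ (hnext _ _ ih).1
  have hC_le : ∀ n, (↑(C n) : Set α) ⊆ ⋃ n, ↑(C n) := Set.subset_iUnion (fun n => (↑(C n) : Set α))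
  have hC_fin (F : Finset α) (hF : ↑F ⊆ ⋃ n, (↑(C n) : Set α)) : ∃ n, F ⊆ C n := by
    have hdir : Directed (· ⊆ ·) fun n => (↑(C n) : Set α) :=
      Monotone.directed_le fun _ _ h => Finset.coe_subset.mpr (hC_mono h)
    simpa using hdir.exists_mem_subset_of_finset_subset_biUnion hF
  refine ⟨⋃ n, ↑(C n), hC_zero ▸ hC_le 0, fun F hF => ?_, fun t ht => ?_⟩
  · obtain ⟨n, hn⟩ := hC_fin F hF
    exact ⟨C n, hn, hC_le n, hC_good n⟩
  obtain ⟨F, hF, hpre⟩ := pre_finite t _ ht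
  obtain ⟨m, hm⟩ := hC_fin F hF
  obtain ⟨a, rfl⟩ := he t
  have hstage : pre (e a) ↑(C (Nat.pair a m)) :=
    pre_mono _ (Finset.coe_subset.mpr (hm.trans (hC_mono (Nat.right_le_pair a m)))) hpre
  have hdone := (hnext _ _ (hC_good _)).2 hstage
  rw [show next (e a) (C (Nat.pair a m)) = C (Nat.pair a m + 1) by
    rw [hC_succ, Nat.unpair_pair]] at hdone
  exact done_mono _ (hC_le _) hdone

end FairSaturation

namespace JRC

open Node

deriving instance Countable for Tm, Fm

@[simp] theorem Label.flip_flip (x : Label) : x.flip.flip = x := by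
  simp [Label.flip]

def labelSet (B : Set Node) : Set Label := ⋃ n ∈ B, ↑n.labels

theorem mem_labelSet {B : Set Node} {n : Node} {x : Label} (hn : n ∈ B) (hx : x ∈ n.labels) :
    x ∈ labelSet B :=
  Set.mem_biUnion hn hx

theorem labelSet_mono {B B' : Set Node} (h : B ⊆ B') : labelSet B ⊆ labelSet B' :=
  Set.biUnion_subset_biUnion_left h

theorem coe_branchLabels (S : Finset Node) : ↑(branchLabels S) = labelSet ↑S :=
  Finset.coe_biUnion

/-- A rule instance; `fCond` covers both `F⇝` and `F⇝₀`. -/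
inductive RuleApp : Type
  | tNeg (φ : Fm) (x : Label)
  | fNeg (φ : Fm) (x : Label)
  | tAnd (φ ψ : Fm) (x : Label)
  | fAnd (φ ψ : Fm) (x : Label)
  | tImp (φ ψ : Fm) (x y z : Label)
  | fImp (φ ψ : Fm) (x : Label)
  | tCond (φ ψ : Fm) (x y : Label)
  | fCond (φ ψ : Fm) (x : Label)
  | tBox (t : Tm) (φ : Fm) (x y : Label)
  | fBox (t : Tm) (φ : Fm) (x : Label)
  | cutR (φ : Fm) (x : Label)
  | rPlus (s t : Tm) (x y : Label)
  | norm (x : Label)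
  deriving Countable

instance : Nonempty RuleApp := ⟨.norm Label.zero⟩

namespace RuleApp

def Applicable : RuleApp → Set Node → Prop
  | tNeg φ x, B => pos φ.snot x ∈ B
  | fNeg φ x, B => neg φ.snot x ∈ B
  | tAnd φ ψ x, B => pos (φ.and ψ) x ∈ B
  | fAnd φ ψ x, B => neg (φ.and ψ) x ∈ B
  | tImp φ ψ x y z, B => pos (φ.rimp ψ) x ∈ B ∧ r3 x y z ∈ B
  | fImp φ ψ x, B => neg (φ.rimp ψ) x ∈ B
  | tCond φ ψ x y, B => pos (φ.cond ψ) x ∈ B ∧ rf φ x y ∈ B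
  | fCond φ ψ x, B => neg (φ.cond ψ) x ∈ B
  | tBox t φ x y, B => pos (.box t φ) x ∈ B ∧ rt t x y ∈ B
  | fBox t φ x, B => neg (.box t φ) x ∈ B
  | cutR φ x, B => (∃ ψ w, pos (φ.cond ψ) w ∈ B ∨ neg (φ.cond ψ) w ∈ B) ∧ x ∈ labelSet B
  | rPlus s t x y, B => rt (s.sum t) x y ∈ B
  | norm x, B => x ∈ labelSet B

def Fulfilled : RuleApp → Set Node → Prop
  | tNeg φ x, B => neg φ x.flip ∈ B
  | fNeg φ x, B => pos φ x.flip ∈ B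
  | tAnd φ ψ x, B => pos φ x ∈ B ∧ pos ψ x ∈ B
  | fAnd φ ψ x, B => neg φ x ∈ B ∨ neg ψ x ∈ B
  | tImp φ ψ _ y z, B => neg φ y ∈ B ∨ pos ψ z ∈ B
  | fImp φ ψ x, B => ∃ y z, r3 x y z ∈ B ∧ pos φ y ∈ B ∧ neg ψ z ∈ B
  | tCond _ ψ _ y, B => pos ψ y ∈ B
  | fCond φ ψ x, B => ∃ y, rf φ x y ∈ B ∧ neg ψ y ∈ B
  | tBox _ φ _ y, B => pos φ y ∈ B
  | fBox t φ x, B => ∃ y, rt t x y ∈ B ∧ neg φ y ∈ B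
  | cutR φ x, B => neg φ x ∈ B ∨ (pos φ x ∈ B ∧ rf φ x x ∈ B)
  | rPlus s t x y, B => rt s x y ∈ B ∧ rt t x y ∈ B
  | norm x, B => r3 Label.zero x x ∈ B

theorem applicable_mono (r : RuleApp) : Monotone r.Applicable := by
  intro B B' h
  cases r <;> simp only [Applicable]
  all_goals first
    | exact fun hB => h hB
    | exact fun hB => ⟨h hB.1, h hB.2⟩
    | exact fun hB => labelSet_mono h hB
    | exact fun ⟨⟨ψ, w, hw⟩, hx⟩ => ⟨⟨ψ, w, hw.imp (@h _) (@h _)⟩, labelSet_mono h hx⟩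

theorem fulfilled_mono (r : RuleApp) : Monotone r.Fulfilled := by
  intro B B' h hB
  cases r <;> simp only [Fulfilled] at hB ⊢ <;> grind

theorem exists_finset_applicable {r : RuleApp} {B : Set Node} (h : r.Applicable B) :
    ∃ F : Finset Node, ↑F ⊆ B ∧ r.Applicable ↑F := by
  cases r <;> simp only [Applicable] at h ⊢
  case cutR φ x =>
    obtain ⟨⟨ψ, w, hw⟩, hx⟩ := h
    obtain ⟨n, hn, hxn⟩ := Set.mem_iUnion₂.mp hx
    have hn' : x ∈ labelSet ↑({n} : Finset Node) := mem_labelSet (by simp) hxn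
    rcases hw with hw | hw
    · exact ⟨{pos (φ.cond ψ) w, n}, by simp [Set.insert_subset_iff, *], ⟨ψ, w, by simp⟩,
        labelSet_mono (by simp) hn'⟩
    · exact ⟨{neg (φ.cond ψ) w, n}, by simp [Set.insert_subset_iff, *], ⟨ψ, w, by simp⟩,
        labelSet_mono (by simp) hn'⟩
  case norm x =>
    obtain ⟨n, hn, hxn⟩ := Set.mem_iUnion₂.mp h
    exact ⟨{n}, by simpa using hn, mem_labelSet (by simp) hxn⟩
  all_goals first
    | exact ⟨{_}, by simpa using h, by simp⟩
    | exact ⟨{_, _}, by rw [Finset.coe_pair]; exact Set.pair_subset h.1 h.2, by simp⟩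

end RuleApp

/-- The invariants that make the label `0` a normal state of the countermodel satisfying
condition (1) of JRC-models. -/
structure NormalAtZero (B : Set Node) : Prop where
  r3_zero : ∀ {y z}, r3 Label.zero y z ∈ B → y = z
  rf_zero : ∀ {φ y}, rf φ Label.zero y ∈ B → pos φ y ∈ B

theorem NormalAtZero.insert {S : Finset Node} {n : Node} (h : NormalAtZero ↑S)
    (h3 : ∀ y z, n = r3 Label.zero y z → y = z)
    (hf : ∀ φ y, n = rf φ Label.zero y → pos φ y ∈ S) : NormalAtZero ↑(insert n S) := by
  rw [Finset.coe_insert]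
  constructor
  · rintro y z (hn | hn)
    exacts [h3 y z hn.symm, h.r3_zero hn]
  · rintro φ y (hn | hn)
    exacts [Set.mem_insert_of_mem _ (hf φ y hn.symm), Set.mem_insert_of_mem _ (h.rf_zero hn)]

def GoodBranch (S : Finset Node) : Prop := ¬ Closes S ∧ NormalAtZero ↑S

def nextFresh (S : Finset Node) : ℕ := (branchLabels S).sup Prod.fst + 1

theorem freshNat_of_nextFresh_le {S : Finset Node} {j : ℕ} (h : nextFresh S ≤ j) :
    FreshNat j S := by
  intro b hb
  have := Finset.le_sup (f := Prod.fst) hb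
  simp only [nextFresh] at h this
  omega

theorem GoodBranch.exists_fulfilled_fImp {S : Finset Node} (hS : GoodBranch S) {φ ψ : Fm}
    {x : Label} (h : neg (φ.rimp ψ) x ∈ S) :
    ∃ S', S ⊆ S' ∧ GoodBranch S' ∧ (RuleApp.fImp φ ψ x).Fulfilled ↑S' := by
  set j := nextFresh S
  obtain ⟨k, hjk, hjk', hk⟩ : ∃ k, (x = Label.zero → j = k) ∧ (x ≠ Label.zero → j ≠ k) ∧ j ≤ k := by
    by_cases hx : x = Label.zero
    · exact ⟨j, fun _ => rfl, fun h => absurd hx h, le_rfl⟩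
    · exact ⟨j + 1, fun h => absurd h hx, fun _ => by omega, by omega⟩
  refine ⟨insert (r3 x (j, false) (k, false)) (insert (pos φ (j, false))
    (insert (neg ψ (k, false)) S)), fun _ hn => by simp [hn],
    ⟨fun hc => hS.1 (.fImp h (freshNat_of_nextFresh_le le_rfl) (freshNat_of_nextFresh_le hk)
      hjk hjk' hc), ?_⟩, (j, false), (k, false), by simp, by simp, by simp⟩
  refine ((hS.2.insert (by simp) (by simp)).insert (by simp) (by simp)).insert ?_ (by simp)
  intro y z hn
  obtain ⟨hx, rfl, rfl⟩ := Node.r3.inj hn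
  simp [hjk hx]

theorem GoodBranch.exists_fulfilled_fCond {S : Finset Node} (hS : GoodBranch S) {φ ψ : Fm}
    {x : Label} (h : neg (φ.cond ψ) x ∈ S) :
    ∃ S', S ⊆ S' ∧ GoodBranch S' ∧ (RuleApp.fCond φ ψ x).Fulfilled ↑S' := by
  have hj : FreshNat (nextFresh S) S := freshNat_of_nextFresh_le le_rfl
  by_cases hx : x = Label.zero
  · subst hx
    refine ⟨insert (rf φ Label.zero (nextFresh S, false)) (insert (pos φ (nextFresh S, false))
      (insert (neg ψ (nextFresh S, false)) S)), fun _ hn => by simp [hn],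
      ⟨fun hc => hS.1 (.fCondZero h hj hc), ?_⟩, (nextFresh S, false), by simp, by simp⟩
    refine ((hS.2.insert (by simp) (by simp)).insert (by simp) (by simp)).insert (by simp) ?_
    rintro χ y ⟨⟩
    simp
  · refine ⟨insert (rf φ x (nextFresh S, false)) (insert (neg ψ (nextFresh S, false)) S),
      fun _ hn => by simp [hn], ⟨fun hc => hS.1 (.fCond h hx hj hc), ?_⟩, (nextFresh S, false),
      by simp, by simp⟩
    refine (hS.2.insert (by simp) (by simp)).insert (by simp) ?_
    rintro χ y ⟨⟩
    exact absurd rfl hx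

theorem GoodBranch.exists_fulfilled_cutR {S : Finset Node} (hS : GoodBranch S) {φ : Fm}
    {x : Label} (hφ : IsAntecedent φ S) (hx : x ∈ branchLabels S) :
    ∃ S', S ⊆ S' ∧ GoodBranch S' ∧ (RuleApp.cutR φ x).Fulfilled ↑S' := by
  by_cases hc : Closes (insert (neg φ x) S)
  · refine ⟨insert (rf φ x x) (insert (pos φ x) S), fun _ hn => by simp [hn],
      ⟨fun hc' => hS.1 (.cutR hφ hx hc (by rwa [Finset.insert_comm])), ?_⟩,
      by simp [RuleApp.Fulfilled]⟩
    refine (hS.2.insert (by simp) (by simp)).insert (by simp) ?_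
    intro χ y hn
    obtain ⟨rfl, -, rfl⟩ := Node.rf.inj hn
    simp
  · exact ⟨_, Finset.subset_insert _ _, ⟨hc, hS.2.insert (by simp) (by simp)⟩,
      by simp [RuleApp.Fulfilled]⟩

theorem GoodBranch.exists_fulfilled {S : Finset Node} (hS : GoodBranch S) (r : RuleApp)
    (hr : r.Applicable ↑S) : ∃ S', S ⊆ S' ∧ GoodBranch S' ∧ r.Fulfilled ↑S' := by
  obtain ⟨hopen, hnorm⟩ := hS
  have split {S₁ S₂ : Finset Node} (h : Closes S₁ → Closes S₂ → Closes S) :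
      ¬ Closes S₁ ∨ ¬ Closes S₂ := by tauto
  have hsub₁ {n : Node} : S ⊆ insert n S := Finset.subset_insert _ _
  have hsub₂ {n n' : Node} : S ⊆ insert n (insert n' S) := hsub₁.trans (Finset.subset_insert _ _)
  cases r <;> simp only [RuleApp.Applicable, Finset.mem_coe] at hr
  case fImp => exact GoodBranch.exists_fulfilled_fImp ⟨hopen, hnorm⟩ hr
  case fCond => exact GoodBranch.exists_fulfilled_fCond ⟨hopen, hnorm⟩ hr
  case cutR =>
    exact GoodBranch.exists_fulfilled_cutR ⟨hopen, hnorm⟩ hr.1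
      (by rw [← Finset.mem_coe, coe_branchLabels]; exact hr.2)
  case tNeg => exact ⟨_, hsub₁, ⟨fun hc => hopen (.tNeg hr hc),
    hnorm.insert (by simp) (by simp)⟩, by simp [RuleApp.Fulfilled]⟩
  case fNeg => exact ⟨_, hsub₁, ⟨fun hc => hopen (.fNeg hr hc),
    hnorm.insert (by simp) (by simp)⟩, by simp [RuleApp.Fulfilled]⟩
  case tAnd => exact ⟨_, hsub₂, ⟨fun hc => hopen (.tAnd hr hc),
    (hnorm.insert (by simp) (by simp)).insert (by simp) (by simp)⟩, by simp [RuleApp.Fulfilled]⟩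
  case tCond => exact ⟨_, hsub₁, ⟨fun hc => hopen (.tCond hr.1 hr.2 hc),
    hnorm.insert (by simp) (by simp)⟩, by simp [RuleApp.Fulfilled]⟩
  case tBox => exact ⟨_, hsub₁, ⟨fun hc => hopen (.tBox hr.1 hr.2 hc),
    hnorm.insert (by simp) (by simp)⟩, by simp [RuleApp.Fulfilled]⟩
  case rPlus => exact ⟨_, hsub₂, ⟨fun hc => hopen (.rPlus hr hc),
    (hnorm.insert (by simp) (by simp)).insert (by simp) (by simp)⟩, by simp [RuleApp.Fulfilled]⟩
  case fBox =>
    exact ⟨_, hsub₂, ⟨fun hc => hopen (.fBox hr (freshNat_of_nextFresh_le le_rfl) hc),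
      (hnorm.insert (by simp) (by simp)).insert (by simp) (by simp)⟩, (nextFresh S, false),
      by simp, by simp⟩
  case norm =>
    refine ⟨_, hsub₁, ⟨fun hc => hopen (.norm (by rwa [← Finset.mem_coe, coe_branchLabels]) hc),
      hnorm.insert ?_ (by simp)⟩, by simp [RuleApp.Fulfilled]⟩
    rintro y z hn
    obtain ⟨-, rfl, rfl⟩ := Node.r3.inj hn
    rfl
  case fAnd =>
    rcases split (.fAnd hr) with hc | hc <;> exact ⟨_, hsub₁, ⟨hc,
      hnorm.insert (by simp) (by simp)⟩, by simp [RuleApp.Fulfilled]⟩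
  case tImp =>
    rcases split (.tImp hr.1 hr.2) with hc | hc <;> exact ⟨_, hsub₁, ⟨hc,
      hnorm.insert (by simp) (by simp)⟩, by simp [RuleApp.Fulfilled]⟩

structure Hintikka (B : Set Node) : Prop where
  not_mem_neg : ∀ {φ x}, pos φ x ∈ B → neg φ x ∉ B
  normalAtZero : NormalAtZero B
  saturated : ∀ r : RuleApp, r.Applicable B → r.Fulfilled B

theorem GoodBranch.exists_hintikka {S : Finset Node} (hS : GoodBranch S) :
    ∃ B, ↑S ⊆ B ∧ Hintikka B := by
  obtain ⟨B, hSB, hfin, hsat⟩ := exists_saturated_of_step GoodBranch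
    RuleApp.Applicable RuleApp.Fulfilled RuleApp.applicable_mono RuleApp.fulfilled_mono
    (fun _ _ => RuleApp.exists_finset_applicable) (fun r _ hS hr => hS.exists_fulfilled r hr) hS
  have hfin₁ {n : Node} (hn : n ∈ B) : ∃ S', n ∈ S' ∧ ↑S' ⊆ B ∧ GoodBranch S' := by
    simpa using hfin {n} (by simpa using hn)
  refine ⟨B, hSB, ⟨fun hp hn => ?_, ⟨fun hn => ?_, fun hn => ?_⟩, hsat⟩⟩
  · obtain ⟨S', hS', -, hgood⟩ :=
      hfin {_, _} (by rw [Finset.coe_pair]; exact Set.pair_subset hp hn)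
    rw [Finset.insert_subset_iff, Finset.singleton_subset_iff] at hS'
    exact hgood.1 (.contra hS'.1 hS'.2)
  · obtain ⟨S', hn', -, hgood⟩ := hfin₁ hn
    exact hgood.2.r3_zero hn'
  · obtain ⟨S', hn', hS'B, hgood⟩ := hfin₁ hn
    exact hS'B (hgood.2.rf_zero hn')

section CanonicalModel

variable (B : Set Node)

open Classical in
noncomputable def labelStar (x : labelSet B) : labelSet B :=
  if h : x.1.flip ∈ labelSet B then ⟨x.1.flip, h⟩ else x

theorem labelStar_of_mem {x : labelSet B} (h : x.1.flip ∈ labelSet B) :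
    labelStar B x = ⟨x.1.flip, h⟩ :=
  dif_pos h

theorem labelStar_labelStar (x : labelSet B) : labelStar B (labelStar B x) = x := by
  by_cases h : x.1.flip ∈ labelSet B
  · rw [labelStar_of_mem B h, labelStar_of_mem B (by simp [x.2])]
    simp
  · simp [labelStar, h]

/-- Truth in the countermodel, defined before the model because its `R_φ` refers to the truth of
`φ` (condition (2) of JRC-models). -/
def val : Fm → labelSet B → Prop
  | .atom p, x => pos (.atom p) x ∈ B
  | .snot φ, x => ¬ val φ (labelStar B x)
  | .and φ ψ, x => val φ x ∧ val ψ x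
  | .rimp φ ψ, x => ∀ y z : labelSet B, r3 x y z ∈ B → val φ y → val ψ z
  | .cond φ ψ, x => ∀ y : labelSet B, rf φ x y ∈ B ∨ (x = y ∧ val φ x) → val ψ y
  | .box t φ, x => ∀ y : labelSet B, rt t x y ∈ B → val φ y

variable {B}

theorem Hintikka.val_of_mem (hB : Hintikka B) (φ : Fm) (x : labelSet B) :
    (pos φ x ∈ B → val B φ x) ∧ (neg φ x ∈ B → ¬ val B φ x) := by
  induction φ generalizing x with
  | atom p => exact ⟨id, fun hn hp => hB.not_mem_neg hp hn⟩
  | snot φ ih =>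
    refine ⟨fun h => ?_, fun h => ?_⟩
    · have hn : neg φ x.1.flip ∈ B := hB.saturated (.tNeg φ x) h
      show ¬ val B φ (labelStar B x)
      rw [labelStar_of_mem B (mem_labelSet hn (by simp [Node.labels]))]
      exact (ih _).2 hn
    · have hp : pos φ x.1.flip ∈ B := hB.saturated (.fNeg φ x) h
      show ¬ ¬ val B φ (labelStar B x)
      rw [labelStar_of_mem B (mem_labelSet hp (by simp [Node.labels]))]
      exact not_not_intro ((ih _).1 hp)
  | and φ ψ ih₁ ih₂ =>
    refine ⟨fun h => ?_, fun h hv => ?_⟩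
    · obtain ⟨h₁, h₂⟩ := hB.saturated (.tAnd φ ψ x) h
      exact ⟨(ih₁ x).1 h₁, (ih₂ x).1 h₂⟩
    · rcases hB.saturated (.fAnd φ ψ x) h with h₁ | h₂
      exacts [(ih₁ x).2 h₁ hv.1, (ih₂ x).2 h₂ hv.2]
  | rimp φ ψ ih₁ ih₂ =>
    refine ⟨fun h y z hr hφ => ?_, fun h hv => ?_⟩
    · rcases hB.saturated (.tImp φ ψ x y z) ⟨h, hr⟩ with hn | hp
      exacts [absurd hφ ((ih₁ y).2 hn), (ih₂ z).1 hp]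
    · obtain ⟨y, z, hr, hp, hn⟩ := hB.saturated (.fImp φ ψ x) h
      exact (ih₂ ⟨z, mem_labelSet hr (by simp [Node.labels])⟩).2 hn
        (hv ⟨y, mem_labelSet hr (by simp [Node.labels])⟩ _ hr ((ih₁ _).1 hp))
  | cond φ ψ ih₁ ih₂ =>
    refine ⟨fun h y hr => ?_, fun h hv => ?_⟩
    · rcases hr with hr | ⟨rfl, hφ⟩
      · exact (ih₂ y).1 (hB.saturated (.tCond φ ψ x y) ⟨h, hr⟩)
      · have hcut := hB.saturated (.cutR φ x) ⟨⟨ψ, x, .inl h⟩, x.2⟩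
        rcases hcut with hn | ⟨-, hr⟩
        exacts [absurd hφ ((ih₁ x).2 hn), (ih₂ x).1 (hB.saturated (.tCond φ ψ x x) ⟨h, hr⟩)]
    · obtain ⟨y, hr, hn⟩ := hB.saturated (.fCond φ ψ x) h
      exact (ih₂ ⟨y, mem_labelSet hr (by simp [Node.labels])⟩).2 hn (hv _ (.inl hr))
  | box t φ ih =>
    refine ⟨fun h y hr => (ih y).1 (hB.saturated (.tBox t φ x y) ⟨h, hr⟩), fun h hv => ?_⟩
    obtain ⟨y, hr, hn⟩ := hB.saturated (.fBox t φ x) h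
    exact (ih ⟨y, mem_labelSet hr (by simp [Node.labels])⟩).2 hn (hv _ hr)

noncomputable def Hintikka.model (hB : Hintikka B) (h0 : Label.zero ∈ labelSet B) : Model where
  W := labelSet B
  N := {x | x.1 = Label.zero}
  N_nonempty := ⟨⟨_, h0⟩, rfl⟩
  R x y z := r3 x y z ∈ B
  normality x y z hx := by
    refine ⟨fun h => Subtype.ext (hB.normalAtZero.r3_zero (hx ▸ h)), ?_⟩
    rintro rfl
    exact hx ▸ hB.saturated (.norm y) y.2
  Rf φ x y := rf φ x y ∈ B ∨ (x = y ∧ val B φ x)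
  Rt t x y := rt t x y ∈ B
  star := labelStar B
  star_star := labelStar_labelStar B
  V p := {x | pos (.atom p) x ∈ B}

theorem Hintikka.sat_model_iff (hB : Hintikka B) (h0 : Label.zero ∈ labelSet B) (φ : Fm)
    (x : labelSet B) : Sat (hB.model h0) φ x ↔ val B φ x := by
  induction φ generalizing x with
  | atom p => rfl
  | snot φ ih => exact not_congr (ih _)
  | and φ ψ ih₁ ih₂ => exact and_congr (ih₁ x) (ih₂ x)
  | rimp φ ψ ih₁ ih₂ =>
    exact forall₂_congr fun y z => imp_congr_right fun _ => imp_congr (ih₁ y) (ih₂ z)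
  | cond φ ψ ih₁ ih₂ => exact forall_congr' fun y => imp_congr_right fun _ => ih₂ y
  | box t φ ih => exact forall_congr' fun y => imp_congr_right fun _ => ih y

theorem Hintikka.isModel_model (hB : Hintikka B) (h0 : Label.zero ∈ labelSet B) :
    IsModel (hB.model h0) := by
  refine ⟨fun φ (x : labelSet B) hx (y : labelSet B) hr => ?_,
    fun φ (x : labelSet B) hx => .inr ⟨rfl, (hB.sat_model_iff h0 φ x).1 hx⟩,
    fun s t (x y : labelSet B) h => hB.saturated (.rPlus s t x y) h⟩
  rw [hB.sat_model_iff h0 φ y]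
  rcases hr with hr | ⟨rfl, hv⟩
  · exact (hB.val_of_mem φ y).1 (hB.normalAtZero.rf_zero (hx ▸ hr))
  · exact hv

theorem Hintikka.not_conseq (hB : Hintikka B) {T : Set Fm} {φ : Fm}
    (hT : ∀ ψ ∈ T, pos ψ Label.zero ∈ B) (hφ : neg φ Label.zero ∈ B) : ¬ Conseq T φ := by
  intro h
  have h0 : Label.zero ∈ labelSet B := mem_labelSet hφ (by simp [Node.labels])
  have hsat := h _ (hB.isModel_model h0) ⟨_, h0⟩ rfl fun ψ hψ =>
    (hB.sat_model_iff h0 ψ _).2 ((hB.val_of_mem ψ _).1 (hT ψ hψ))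
  exact (hB.val_of_mem φ _).2 hφ ((hB.sat_model_iff h0 φ _).1 hsat)

end CanonicalModel

end JRC

open JRC in
/-- Completeness of the JRC tableau system: if T ⊨_JRC φ for a finite
set of premises T, then there is a closed tableau for φ from T. -/
theorem stmt_18 (T : Finset Fm) (φ : Fm) (h : Conseq (↑T : Set Fm) φ) :
    TabProv T φ := by
  by_contra hopen
  have hroot : NormalAtZero ↑(insert (Node.neg φ Label.zero) (T.image (Node.pos · Label.zero))) :=
    ⟨fun hm => by simp at hm, fun hm => by simp at hm⟩
  obtain ⟨B, hSB, hB⟩ := GoodBranch.exists_hintikka ⟨hopen, hroot⟩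
  exact hB.not_conseq (fun ψ hψ => hSB (by simpa using hψ)) (hSB (by simp)) h
end

section
/- Counterpossibles are not valid in JRC: for atomic propositions p and q, neither (p ∧ ∼p) ⇝ q nor q ⇝ (p ∨ ∼p) is JRC-valid (where φ∨ψ := ∼(∼φ∧∼ψ)). -/
/-!
Every Routley frame carries a JRC-model whose counterfactual relation is as large as clause (1)
permits, `R_φ(w) = ‖φ‖`. This is well defined because the truth of `φ ⇝ ψ` consults `R_φ` only
for the smaller formula `φ`, and it makes `φ ⇝ ψ` fail at every normal state as soon as some
state satisfies `φ` but not `ψ`. Take two states swapped by `*`, with `p` true only at the first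
and `q` only at the second: the first is an impossible state satisfying `p ∧ ∼p` but not `q`,
the second satisfies `q` but not `p ∨ ∼p`.
-/

namespace JRC

/-- Truth in `M` when `R_φ(w) = ‖φ‖` for every formula `φ` and state `w`. -/
def canonicalSat (M : Model) : Fm → M.W → Prop
  | .atom p, w => w ∈ M.V p
  | .snot φ, w => ¬ canonicalSat M φ (M.star w)
  | .and φ ψ, w => canonicalSat M φ w ∧ canonicalSat M ψ w
  | .rimp φ ψ, w => ∀ v u, M.R w v u → canonicalSat M φ v → canonicalSat M ψ u
  | .cond φ ψ, _ => ∀ v, canonicalSat M φ v → canonicalSat M ψ v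
  | .box t φ, w => ∀ v, M.Rt t w v → canonicalSat M φ v

def Model.withCanonicalRf (M : Model) : Model :=
  { M with Rf := fun φ _ v => canonicalSat M φ v }

theorem sat_withCanonicalRf_iff (M : Model) (φ : Fm) (w : M.W) :
    Sat M.withCanonicalRf φ w ↔ canonicalSat M φ w := by
  induction φ generalizing w with
  | atom => rfl
  | snot φ ih => exact not_congr (ih _)
  | and φ ψ ihφ ihψ => exact and_congr (ihφ w) (ihψ w)
  | rimp φ ψ ihφ ihψ =>
    exact forall₂_congr fun v u => imp_congr_right fun _ => imp_congr (ihφ v) (ihψ u)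
  | cond φ ψ ihφ ihψ => exact forall_congr' fun v => imp_congr_right fun _ => ihψ v
  | box t φ ih => exact forall_congr' fun v => imp_congr_right fun _ => ih v

theorem isModel_withCanonicalRf (M : Model)
    (hRt : ∀ (s t : Tm) (w v : M.W), M.Rt (s.sum t) w v → M.Rt s w v ∧ M.Rt t w v) :
    IsModel M.withCanonicalRf :=
  ⟨fun φ _ _ v hv => (sat_withCanonicalRf_iff M φ v).2 hv,
    fun φ w hw => (sat_withCanonicalRf_iff M φ w).1 hw, hRt⟩

theorem not_valid_cond_of_canonicalSat (M : Model)
    (hRt : ∀ (s t : Tm) (w v : M.W), M.Rt (s.sum t) w v → M.Rt s w v ∧ M.Rt t w v)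
    {φ ψ : Fm} (v : M.W) (hφ : canonicalSat M φ v) (hψ : ¬ canonicalSat M ψ v) :
    ¬ Valid (φ.cond ψ) := fun hValid => by
  obtain ⟨w, hw⟩ := M.N_nonempty
  exact hψ <| (sat_withCanonicalRf_iff M ψ v).1 <|
    hValid M.withCanonicalRf (isModel_withCanonicalRf M hRt) w hw v hφ

/-- The relations `R_φ` are placeholders: `withCanonicalRf` replaces them. -/
abbrev swapFrame (p q : ℕ) : Model where
  W := Bool
  N := Set.univ
  N_nonempty := Set.univ_nonempty
  R _ v u := v = u
  normality _ _ _ _ := Iff.rfl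
  Rf _ _ _ := False
  Rt _ _ _ := False
  star := not
  star_star := Bool.not_not
  V r := {w | r = p ∧ w = true ∨ r = q ∧ w = false}

end JRC

open JRC in
/-- counterpossibles are not valid in JRC: for distinct atomic
propositions p and q, neither (p ∧ ∼p) ⇝ q nor q ⇝ (p ∨ ∼p) is JRC-valid. -/
theorem stmt_19 (p q : ℕ) (hpq : p ≠ q) :
    ¬ Valid (((Fm.atom p).and (Fm.snot (Fm.atom p))).cond (Fm.atom q)) ∧
    ¬ Valid ((Fm.atom q).cond (orF (Fm.atom p) (Fm.snot (Fm.atom p)))) := by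
  refine ⟨not_valid_cond_of_canonicalSat (swapFrame p q) (fun _ _ _ _ => False.elim) true ?_ ?_,
    not_valid_cond_of_canonicalSat (swapFrame p q) (fun _ _ _ _ => False.elim) false ?_ ?_⟩ <;>
  simp [canonicalSat, orF, hpq, hpq.symm]
end
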